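/- arXiv:math/0011099 — 2 statements merged into one kernel-verified Lean document; each statement's English description precedes it below -/
import Mathlib

section
/- For any skew shape λ/μ, there is a norm-preserving bijection between semistandard Young tableaux of shape λ/μ and reverse semistandard Young tableaux of shape λ/μ. In particular, for every non-negative integer m, the number of SSYT of shape λ/μ with entry sum m equals the number of reverse SSYT of shape λ/μ with entry sum m. -/
open scoped Classical

/-- The cells of the skew diagram `lam/mu` (rows indexed from 1):
cell `(i,j)` with `mu i < j ≤ lam i`. -/
def cells (lam mu : ℕ → ℕ) : Set (ℕ × ℕ) :=
  {p | 1 ≤ p.1 ∧ mu p.1 < p.2 ∧ p.2 ≤ lam p.1}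

/-- A partition: a weakly decreasing sequence of naturals, eventually zero. -/
def IsPartition (l : ℕ → ℕ) : Prop :=
  (∀ i j, i ≤ j → l j ≤ l i) ∧ ∃ N, ∀ i, N ≤ i → l i = 0

/-- The content `c(i,j) = j - i` of a cell. -/
def content (p : ℕ × ℕ) : ℤ := (p.2 : ℤ) - (p.1 : ℤ)

/-- A tabloid (arbitrary filling) of shape `lam/mu`: zero outside the cells. -/
def IsFilling (lam mu : ℕ → ℕ) (T : ℕ × ℕ → ℕ) : Prop :=
  ∀ p, p ∉ cells lam mu → T p = 0

/-- A semistandard Young tableau of shape `lam/mu`: weakly increasing along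
rows, strictly increasing down columns. -/
def IsSSYT (lam mu : ℕ → ℕ) (P : ℕ × ℕ → ℕ) : Prop :=
  IsFilling lam mu P ∧
  (∀ i j, (i, j) ∈ cells lam mu → (i, j+1) ∈ cells lam mu → P (i, j) ≤ P (i, j+1)) ∧
  (∀ i j, (i, j) ∈ cells lam mu → (i+1, j) ∈ cells lam mu → P (i, j) < P (i+1, j))

/-- A reverse semistandard Young tableau of shape `lam/mu`: weakly decreasing
along rows, strictly decreasing down columns. -/
def IsRSSYT (lam mu : ℕ → ℕ) (R : ℕ × ℕ → ℕ) : Prop :=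
  IsFilling lam mu R ∧
  (∀ i j, (i, j) ∈ cells lam mu → (i, j+1) ∈ cells lam mu → R (i, j+1) ≤ R (i, j)) ∧
  (∀ i j, (i, j) ∈ cells lam mu → (i+1, j) ∈ cells lam mu → R (i+1, j) < R (i, j))

/-- The norm of a filling: the sum of its entries. -/
noncomputable def tnorm (lam mu : ℕ → ℕ) (T : ℕ × ℕ → ℕ) : ℕ :=
  ∑ᶠ p ∈ cells lam mu, T p

/-- The content weight `w_c(T) = Σ T_ρ (a + c(ρ))`. -/
noncomputable def wc (lam mu : ℕ → ℕ) (a : ℤ) (T : ℕ × ℕ → ℕ) : ℤ :=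
  ∑ᶠ p ∈ cells lam mu, (T p : ℤ) * (a + content p)

/-- The bound `R_{ij} ≤ a + mu_i - i` on a reverse SSYT. -/
def Bounded (lam mu : ℕ → ℕ) (a : ℤ) (R : ℕ × ℕ → ℕ) : Prop :=
  ∀ p ∈ cells lam mu, (R p : ℤ) ≤ a + (mu p.1 : ℤ) - (p.1 : ℤ)

/-! ### Auxiliary development: Bender–Knuth involutions -/

section Basic

variable {lam mu : ℕ → ℕ}

lemma cells_finite (hlam : IsPartition lam) : (cells lam mu).Finite := by
  obtain ⟨N, hN⟩ := hlam.2
  apply Set.Finite.subset (Set.finite_Icc ((1:ℕ),(1:ℕ)) (N, lam 0))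
  rintro ⟨i, j⟩ ⟨hi, hj1, hj2⟩
  have hiN : i ≤ N := by
    by_contra h
    have := hN i (by omega)
    simp only at hj2 hj1
    omega
  have : j ≤ lam 0 := le_trans hj2 (hlam.1 0 i (Nat.zero_le _))
  simp only [Set.mem_Icc, Prod.mk_le_mk]
  exact ⟨⟨hi, by omega⟩, ⟨hiN, this⟩⟩

noncomputable def cellFinset (lam mu : ℕ → ℕ) : Finset (ℕ × ℕ) :=
  if h : (cells lam mu).Finite then h.toFinset else ∅

lemma mem_cellFinset (hlam : IsPartition lam) {p : ℕ × ℕ} :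
    p ∈ cellFinset lam mu ↔ p ∈ cells lam mu := by
  rw [cellFinset, dif_pos (cells_finite hlam)]
  exact Set.Finite.mem_toFinset _

lemma mem_cells' {i j : ℕ} : (i, j) ∈ cells lam mu ↔ 1 ≤ i ∧ mu i < j ∧ j ≤ lam i :=
  Iff.rfl

lemma coe_cellFinset (hlam : IsPartition lam) :
    (cellFinset lam mu : Set (ℕ × ℕ)) = cells lam mu :=
  Set.ext fun _ => mem_cellFinset hlam

lemma tnorm_eq_sum (hlam : IsPartition lam) (T : ℕ × ℕ → ℕ) :
    tnorm lam mu T = ∑ p ∈ cellFinset lam mu, T p := by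
  rw [tnorm, ← coe_cellFinset hlam, finsum_mem_coe_finset]

lemma entry_le_tnorm (hlam : IsPartition lam) {T : ℕ × ℕ → ℕ} {p : ℕ × ℕ}
    (hp : p ∈ cells lam mu) : T p ≤ tnorm lam mu T := by
  rw [tnorm_eq_sum hlam]
  exact Finset.single_le_sum (fun q _ => Nat.zero_le _) ((mem_cellFinset hlam).2 hp)

lemma rowMono {P : ℕ × ℕ → ℕ} (hP : IsSSYT lam mu P) {i j : ℕ}
    (hj : (i, j) ∈ cells lam mu) :
    ∀ j', j ≤ j' → (i, j') ∈ cells lam mu → P (i, j) ≤ P (i, j') := by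
  intro j' h
  induction j', h using Nat.le_induction with
  | base => intro _; exact le_rfl
  | succ n hn ih =>
    intro hc
    have hcn : (i, n) ∈ cells lam mu := by
      rw [mem_cells'] at hj hc ⊢
      omega
    exact le_trans (ih hcn) (hP.2.1 i n hcn hc)

lemma cell_below_left (hmu : IsPartition mu) {i j j' : ℕ}
    (h : (i + 1, j) ∈ cells lam mu) (h' : (i, j') ∈ cells lam mu) (hjj : j' ≤ j) :
    (i + 1, j') ∈ cells lam mu := by
  rw [mem_cells'] at h h' ⊢
  have : mu (i + 1) ≤ mu i := hmu.1 i (i + 1) (Nat.le_succ _)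
  omega

lemma cell_above_right (hlam : IsPartition lam) {i j j' : ℕ}
    (h : (i, j) ∈ cells lam mu) (h' : (i + 1, j') ∈ cells lam mu) (hjj : j ≤ j') :
    (i, j') ∈ cells lam mu := by
  rw [mem_cells'] at h h' ⊢
  have : lam (i + 1) ≤ lam i := hlam.1 i (i + 1) (Nat.le_succ _)
  omega

end Basic

section BK

variable (lam mu P : ℕ → ℕ) (k : ℕ)

/-- A cell is *free* for the Bender–Knuth move at `k` if it has entry `k` with no
`k+1` directly below, or entry `k+1` with no `k` directly above. -/
def FreeC (lam mu : ℕ → ℕ) (P : ℕ × ℕ → ℕ) (k : ℕ) (p : ℕ × ℕ) : Prop :=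
  p ∈ cells lam mu ∧
    ((P p = k ∧ ¬((p.1 + 1, p.2) ∈ cells lam mu ∧ P (p.1 + 1, p.2) = k + 1)) ∨
     (P p = k + 1 ∧ ¬((p.1 - 1, p.2) ∈ cells lam mu ∧ P (p.1 - 1, p.2) = k)))

/-- `sInf + sSup` of the free columns of row `i`. -/
noncomputable def rIdx (lam mu : ℕ → ℕ) (P : ℕ × ℕ → ℕ) (k i : ℕ) : ℕ :=
  sInf {j | FreeC lam mu P k (i, j)} + sSup {j | FreeC lam mu P k (i, j)}

/-- The Bender–Knuth involution at `k`. -/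
noncomputable def bk (lam mu : ℕ → ℕ) (P : ℕ × ℕ → ℕ) (k : ℕ) : ℕ × ℕ → ℕ :=
  fun p =>
    if FreeC lam mu P k p then 2 * k + 1 - P (p.1, rIdx lam mu P k p.1 - p.2) else P p

variable {lam mu k}
variable {P : ℕ × ℕ → ℕ}

lemma free_val {i j : ℕ} (h : FreeC lam mu P k (i, j)) :
    P (i, j) = k ∨ P (i, j) = k + 1 := by
  rcases h.2 with ⟨hv, _⟩ | ⟨hv, _⟩
  · exact Or.inl hv
  · exact Or.inr hv

lemma notFree_k {i j : ℕ} (hc : (i, j) ∈ cells lam mu) (hv : P (i, j) = k)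
    (hnf : ¬FreeC lam mu P k (i, j)) :
    (i + 1, j) ∈ cells lam mu ∧ P (i + 1, j) = k + 1 := by
  by_contra h
  exact hnf ⟨hc, Or.inl ⟨hv, h⟩⟩

lemma notFree_k1 {i j : ℕ} (hc : (i, j) ∈ cells lam mu) (hv : P (i, j) = k + 1)
    (hnf : ¬FreeC lam mu P k (i, j)) :
    (i - 1, j) ∈ cells lam mu ∧ P (i - 1, j) = k := by
  by_contra h
  exact hnf ⟨hc, Or.inr ⟨hv, h⟩⟩

lemma free_below (hP : IsSSYT lam mu P) {i j : ℕ} (hf : FreeC lam mu P k (i, j))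
    (hb : (i + 1, j) ∈ cells lam mu) : k + 2 ≤ P (i + 1, j) := by
  have hlt := hP.2.2 i j hf.1 hb
  rcases hf.2 with ⟨hv, hn⟩ | ⟨hv, hn⟩
  · have : P (i + 1, j) ≠ k + 1 := fun he => hn ⟨hb, he⟩
    omega
  · omega

lemma free_above (hP : IsSSYT lam mu P) {i j : ℕ} (hf : FreeC lam mu P k (i, j))
    (ha : (i - 1, j) ∈ cells lam mu) : P (i - 1, j) < k := by
  have hi1 : 1 ≤ i - 1 := ha.1
  have hii : i - 1 + 1 = i := by omega
  have hlt : P (i - 1, j) < P (i, j) := by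
    have := hP.2.2 (i - 1) j ha (by rw [hii]; exact hf.1)
    rwa [hii] at this
  rcases hf.2 with ⟨hv, hn⟩ | ⟨hv, hn⟩
  · omega
  · have : P (i - 1, j) ≠ k := fun he => hn ⟨ha, he⟩
    omega

lemma contig (hlam : IsPartition lam) (hmu : IsPartition mu) (hP : IsSSYT lam mu P)
    {i j1 j j2 : ℕ} (h1 : FreeC lam mu P k (i, j1)) (h2 : FreeC lam mu P k (i, j2))
    (hle1 : j1 ≤ j) (hle2 : j ≤ j2) : FreeC lam mu P k (i, j) := by
  have hc1 := h1.1
  have hc2 := h2.1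
  have hc : (i, j) ∈ cells lam mu := by
    rw [mem_cells'] at hc1 hc2 ⊢
    omega
  have hm1 := rowMono hP hc1 j hle1 hc
  have hm2 := rowMono hP hc j2 hle2 hc2
  have hlow : k ≤ P (i, j) := by rcases free_val h1 with h | h <;> omega
  have hhigh : P (i, j) ≤ k + 1 := by rcases free_val h2 with h | h <;> omega
  refine ⟨hc, ?_⟩
  have : P (i, j) = k ∨ P (i, j) = k + 1 := by omega
  rcases this with hv | hv
  · left
    refine ⟨hv, ?_⟩
    rintro ⟨hbc0, hbv0⟩
    have hbc : (i + 1, j) ∈ cells lam mu := hbc0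
    have hbv : P (i + 1, j) = k + 1 := hbv0
    have hv1 : P (i, j1) = k := by rcases free_val h1 with h | h <;> omega
    have hbc1 : (i + 1, j1) ∈ cells lam mu := cell_below_left hmu hbc hc1 hle1
    have e1 : P (i, j1) < P (i + 1, j1) := hP.2.2 i j1 hc1 hbc1
    have e2 : P (i + 1, j1) ≤ P (i + 1, j) := rowMono hP hbc1 j hle1 hbc
    rcases h1.2 with ⟨_, hn⟩ | ⟨hv', _⟩
    · exact hn ⟨hbc1, show P (i + 1, j1) = k + 1 by omega⟩
    · omega
  · right
    refine ⟨hv, ?_⟩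
    rintro ⟨hac0, hav0⟩
    have hac : (i - 1, j) ∈ cells lam mu := hac0
    have hav : P (i - 1, j) = k := hav0
    have hv2 : P (i, j2) = k + 1 := by rcases free_val h2 with h | h <;> omega
    have hi1 : 1 ≤ i - 1 := hac.1
    have hii : i - 1 + 1 = i := by omega
    have hac2 : (i - 1, j2) ∈ cells lam mu :=
      cell_above_right hlam hac (by rw [hii]; exact hc2) hle2
    have e1 : P (i - 1, j) ≤ P (i - 1, j2) := rowMono hP hac j2 hle2 hac2
    have e2 : P (i - 1, j2) < P (i, j2) := by
      have := hP.2.2 (i - 1) j2 hac2 (by rw [hii]; exact hc2)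
      rwa [hii] at this
    rcases h2.2 with ⟨hv', _⟩ | ⟨_, hn⟩
    · omega
    · exact hn ⟨hac2, show P (i - 1, j2) = k by omega⟩

lemma bddAbove_free (i : ℕ) : BddAbove {j | FreeC lam mu P k (i, j)} :=
  ⟨lam i, fun j hj => hj.1.2.2⟩

lemma free_between (hlam : IsPartition lam) (hmu : IsPartition mu)
    (hP : IsSSYT lam mu P) {i j0 : ℕ} (h0 : FreeC lam mu P k (i, j0)) (j : ℕ) :
    FreeC lam mu P k (i, j) ↔
      sInf {j | FreeC lam mu P k (i, j)} ≤ j ∧ j ≤ sSup {j | FreeC lam mu P k (i, j)} := by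
  have hne : {j | FreeC lam mu P k (i, j)}.Nonempty := ⟨j0, h0⟩
  constructor
  · intro h
    exact ⟨Nat.sInf_le h, le_csSup (bddAbove_free i) h⟩
  · rintro ⟨ha, hb⟩
    exact contig hlam hmu hP (Nat.sInf_mem hne) (Nat.sSup_mem hne (bddAbove_free i)) ha hb

lemma refl_free (hlam : IsPartition lam) (hmu : IsPartition mu) (hP : IsSSYT lam mu P)
    {i j : ℕ} (h : FreeC lam mu P k (i, j)) :
    FreeC lam mu P k (i, rIdx lam mu P k i - j) := by
  have h1 := (free_between hlam hmu hP h j).1 h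
  rw [free_between hlam hmu hP h _]
  rw [rIdx]
  omega

lemma refl_refl (hlam : IsPartition lam) (hmu : IsPartition mu) (hP : IsSSYT lam mu P)
    {i j : ℕ} (h : FreeC lam mu P k (i, j)) :
    rIdx lam mu P k i - (rIdx lam mu P k i - j) = j := by
  have h1 := (free_between hlam hmu hP h j).1 h
  rw [rIdx] at *
  omega

lemma bk_free {i j : ℕ} (h : FreeC lam mu P k (i, j)) :
    bk lam mu P k (i, j) = 2 * k + 1 - P (i, rIdx lam mu P k i - j) := by
  simp only [bk]
  rw [if_pos h]

lemma bk_notFree {p : ℕ × ℕ} (h : ¬FreeC lam mu P k p) : bk lam mu P k p = P p := by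
  simp only [bk]
  rw [if_neg h]

lemma bk_free_val (hlam : IsPartition lam) (hmu : IsPartition mu) (hP : IsSSYT lam mu P)
    {i j : ℕ} (h : FreeC lam mu P k (i, j)) :
    k ≤ bk lam mu P k (i, j) ∧ bk lam mu P k (i, j) ≤ k + 1 := by
  rw [bk_free h]
  have hr := refl_free hlam hmu hP h
  rcases free_val hr with h' | h' <;> omega

end BK

section BK2

variable {lam mu : ℕ → ℕ} {P : ℕ × ℕ → ℕ} {k : ℕ}

lemma bk_ssyt (hlam : IsPartition lam) (hmu : IsPartition mu) (hP : IsSSYT lam mu P) :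
    IsSSYT lam mu (bk lam mu P k) := by
  refine ⟨?_, ?_, ?_⟩
  · intro p hp
    rw [bk_notFree (fun hf => hp hf.1)]
    exact hP.1 p hp
  · intro i j hc hc'
    by_cases h1 : FreeC lam mu P k (i, j) <;> by_cases h2 : FreeC lam mu P k (i, j + 1)
    · rw [bk_free h1, bk_free h2]
      have hrj := refl_free hlam hmu hP h1
      have hrj1 := refl_free hlam hmu hP h2
      have hmon : P (i, rIdx lam mu P k i - (j + 1)) ≤ P (i, rIdx lam mu P k i - j) :=
        rowMono hP hrj1.1 _ (by omega) hrj.1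
      omega
    · have hbk := (bk_free_val hlam hmu hP h1).2
      rw [bk_notFree h2]
      suffices h : k + 1 ≤ P (i, j + 1) by omega
      by_contra hlt
      push_neg at hlt
      have hmon := rowMono hP hc (j + 1) (Nat.le_succ j) hc'
      have hv : P (i, j + 1) = k := by rcases free_val h1 with h | h <;> omega
      have hv0 : P (i, j) = k := by rcases free_val h1 with h | h <;> omega
      have hlocked := notFree_k hc' hv h2
      have hbc : (i + 1, j) ∈ cells lam mu := cell_below_left hmu hlocked.1 hc (Nat.le_succ j)
      have e1 : P (i, j) < P (i + 1, j) := hP.2.2 i j hc hbc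
      have e2 : P (i + 1, j) ≤ P (i + 1, j + 1) := rowMono hP hbc (j + 1) (Nat.le_succ j) hlocked.1
      rcases h1.2 with ⟨_, hn⟩ | ⟨hv', _⟩
      · exact hn ⟨hbc, show P (i + 1, j) = k + 1 by omega⟩
      · omega
    · have hbk := (bk_free_val hlam hmu hP h2).1
      rw [bk_notFree h1]
      suffices h : P (i, j) ≤ k by omega
      by_contra h
      push_neg at h
      have hmon := rowMono hP hc (j + 1) (Nat.le_succ j) hc'
      have hv2 : P (i, j + 1) = k + 1 := by rcases free_val h2 with h' | h' <;> omega
      have hv : P (i, j) = k + 1 := by omega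
      have hlocked := notFree_k1 hc hv h1
      have hi1 : 1 ≤ i - 1 := hlocked.1.1
      have hii : i - 1 + 1 = i := by omega
      have hac : (i - 1, j + 1) ∈ cells lam mu :=
        cell_above_right hlam hlocked.1 (by rw [hii]; exact hc') (Nat.le_succ j)
      have e1 : P (i - 1, j) ≤ P (i - 1, j + 1) := rowMono hP hlocked.1 (j + 1) (Nat.le_succ j) hac
      have e2 : P (i - 1, j + 1) < P (i, j + 1) := by
        have := hP.2.2 (i - 1) (j + 1) hac (by rw [hii]; exact hc')
        rwa [hii] at this
      rcases h2.2 with ⟨hv', _⟩ | ⟨_, hn⟩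
      · omega
      · exact hn ⟨hac, show P (i - 1, j + 1) = k by omega⟩
    · rw [bk_notFree h1, bk_notFree h2]
      exact hP.2.1 i j hc hc'
  · intro i j hc hc'
    by_cases h1 : FreeC lam mu P k (i, j)
    · have hw : k + 2 ≤ P (i + 1, j) := free_below hP h1 hc'
      have hnf : ¬FreeC lam mu P k (i + 1, j) := fun hf => by
        rcases free_val hf with h | h <;> omega
      rw [bk_notFree hnf]
      have := (bk_free_val hlam hmu hP h1).2
      omega
    · by_cases h2 : FreeC lam mu P k (i + 1, j)
      · have hab : P (i, j) < k := free_above hP h2 hc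
        rw [bk_notFree h1]
        have := (bk_free_val hlam hmu hP h2).1
        omega
      · rw [bk_notFree h1, bk_notFree h2]
        exact hP.2.2 i j hc hc'

lemma free_bk_of_free (hlam : IsPartition lam) (hmu : IsPartition mu) (hP : IsSSYT lam mu P)
    {i j : ℕ} (h : FreeC lam mu P k (i, j)) : FreeC lam mu (bk lam mu P k) k (i, j) := by
  have hb := bk_free_val hlam hmu hP h
  refine ⟨h.1, ?_⟩
  have : bk lam mu P k (i, j) = k ∨ bk lam mu P k (i, j) = k + 1 := by omega
  rcases this with hv | hv
  · left
    refine ⟨hv, ?_⟩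
    rintro ⟨hbc0, hbv0⟩
    have hbc : (i + 1, j) ∈ cells lam mu := hbc0
    have hbv : bk lam mu P k (i + 1, j) = k + 1 := hbv0
    have h2 := free_below hP h hbc
    have hnf : ¬FreeC lam mu P k (i + 1, j) := fun hf => by
      rcases free_val hf with h' | h' <;> omega
    rw [bk_notFree hnf] at hbv
    omega
  · right
    refine ⟨hv, ?_⟩
    rintro ⟨hac0, hav0⟩
    have hac : (i - 1, j) ∈ cells lam mu := hac0
    have hav : bk lam mu P k (i - 1, j) = k := hav0
    have h2 := free_above hP h hac
    have hnf : ¬FreeC lam mu P k (i - 1, j) := fun hf => by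
      rcases free_val hf with h' | h' <;> omega
    rw [bk_notFree hnf] at hav
    omega

lemma notfree_bk_of_notfree {i j : ℕ} (h : ¬FreeC lam mu P k (i, j)) :
    ¬FreeC lam mu (bk lam mu P k) k (i, j) := by
  intro hf
  have hc : (i, j) ∈ cells lam mu := hf.1
  by_cases hk : P (i, j) = k
  · have hl := notFree_k hc hk h
    have hnfb : ¬FreeC lam mu P k (i + 1, j) := by
      intro hfb
      rcases hfb.2 with ⟨hv', hn⟩ | ⟨hv', hn⟩
      · have : P (i + 1, j) = k + 1 := hl.2
        omega
      · exact hn ⟨show ((i + 1) - 1, j) ∈ cells lam mu from hc,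
          show P ((i + 1) - 1, j) = k from hk⟩
    rcases hf.2 with ⟨hv', hn⟩ | ⟨hv', hn⟩
    · exact hn ⟨hl.1, show bk lam mu P k (i + 1, j) = k + 1 by
        rw [bk_notFree hnfb]; exact hl.2⟩
    · rw [bk_notFree h] at hv'
      omega
  · by_cases hk1 : P (i, j) = k + 1
    · have hl := notFree_k1 hc hk1 h
      have hi1 : 1 ≤ i - 1 := hl.1.1
      have hii : i - 1 + 1 = i := by omega
      have hnfa : ¬FreeC lam mu P k (i - 1, j) := by
        intro hfa
        rcases hfa.2 with ⟨hv', hn⟩ | ⟨hv', hn⟩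
        · refine hn ⟨?_, ?_⟩
          · show (i - 1 + 1, j) ∈ cells lam mu
            rw [hii]; exact hc
          · show P (i - 1 + 1, j) = k + 1
            rw [hii]; exact hk1
        · have : P (i - 1, j) = k := hl.2
          omega
      rcases hf.2 with ⟨hv', hn⟩ | ⟨hv', hn⟩
      · rw [bk_notFree h] at hv'
        omega
      · exact hn ⟨hl.1, show bk lam mu P k (i - 1, j) = k by
          rw [bk_notFree hnfa]; exact hl.2⟩
    · rcases hf.2 with ⟨hv', _⟩ | ⟨hv', _⟩ <;> rw [bk_notFree h] at hv' <;> omega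

lemma free_bk_iff (hlam : IsPartition lam) (hmu : IsPartition mu) (hP : IsSSYT lam mu P)
    {i j : ℕ} : FreeC lam mu (bk lam mu P k) k (i, j) ↔ FreeC lam mu P k (i, j) := by
  constructor
  · intro h
    by_contra hn
    exact notfree_bk_of_notfree hn h
  · exact free_bk_of_free hlam hmu hP

lemma rIdx_bk (hlam : IsPartition lam) (hmu : IsPartition mu) (hP : IsSSYT lam mu P)
    (i : ℕ) : rIdx lam mu (bk lam mu P k) k i = rIdx lam mu P k i := by
  have hs : {j | FreeC lam mu (bk lam mu P k) k (i, j)} = {j | FreeC lam mu P k (i, j)} :=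
    Set.ext fun j => free_bk_iff hlam hmu hP
  rw [rIdx, rIdx, hs]

lemma bk_bk (hlam : IsPartition lam) (hmu : IsPartition mu) (hP : IsSSYT lam mu P) :
    bk lam mu (bk lam mu P k) k = P := by
  funext p
  obtain ⟨i, j⟩ := p
  by_cases h : FreeC lam mu P k (i, j)
  · rw [bk_free ((free_bk_iff hlam hmu hP).2 h), rIdx_bk hlam hmu hP]
    have hr := refl_free hlam hmu hP h
    rw [bk_free hr, refl_refl hlam hmu hP h]
    rcases free_val h with hv | hv <;> omega
  · rw [bk_notFree (fun hf => h ((free_bk_iff hlam hmu hP).1 hf)), bk_notFree h]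

end BK2

section Cnt

variable {lam mu : ℕ → ℕ} {P : ℕ × ℕ → ℕ} {k : ℕ}

/-- Number of cells with entry `v`. -/
noncomputable def cnt (lam mu : ℕ → ℕ) (P : ℕ × ℕ → ℕ) (v : ℕ) : ℕ :=
  ((cellFinset lam mu).filter (fun p => P p = v)).card

/-- Swap rule for counting: `τ_k`. -/
def tau (k v : ℕ) : ℕ := if v = k then k + 1 else if v = k + 1 then k else v

lemma cnt_bk_ne (hlam : IsPartition lam) (hmu : IsPartition mu) (hP : IsSSYT lam mu P)
    {v : ℕ} (h1 : v ≠ k) (h2 : v ≠ k + 1) :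
    cnt lam mu (bk lam mu P k) v = cnt lam mu P v := by
  rw [cnt, cnt]
  congr 1
  apply Finset.filter_congr
  intro p hp
  obtain ⟨i, j⟩ := p
  by_cases hf : FreeC lam mu P k (i, j)
  · have hb := bk_free_val hlam hmu hP hf
    have hv := free_val hf
    constructor
    · intro h; omega
    · intro h; omega
  · rw [bk_notFree hf]

lemma cnt_bk_k (hlam : IsPartition lam) (hmu : IsPartition mu) (hP : IsSSYT lam mu P) :
    cnt lam mu (bk lam mu P k) k = cnt lam mu P (k + 1) := by
  rw [cnt, cnt]
  apply Finset.card_bij'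
    (i := fun p _ => if FreeC lam mu P k p then (p.1, rIdx lam mu P k p.1 - p.2)
      else (p.1 + 1, p.2))
    (j := fun q _ => if FreeC lam mu P k q then (q.1, rIdx lam mu P k q.1 - q.2)
      else (q.1 - 1, q.2))
  · -- maps forward
    rintro ⟨i, j⟩ hp
    rw [Finset.mem_filter, mem_cellFinset hlam] at hp
    obtain ⟨hc, hval⟩ := hp
    by_cases hf : FreeC lam mu P k (i, j)
    · rw [if_pos hf]
      have hr := refl_free hlam hmu hP hf
      rw [Finset.mem_filter, mem_cellFinset hlam]
      refine ⟨hr.1, ?_⟩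
      have hv := free_val hr
      rw [bk_free hf] at hval
      show P (i, rIdx lam mu P k i - j) = k + 1
      omega
    · rw [if_neg hf]
      rw [bk_notFree hf] at hval
      have hl := notFree_k hc hval hf
      rw [Finset.mem_filter, mem_cellFinset hlam]
      exact ⟨hl.1, hl.2⟩
  · -- maps backward
    rintro ⟨i, j⟩ hq
    rw [Finset.mem_filter, mem_cellFinset hlam] at hq
    obtain ⟨hc, hval⟩ := hq
    by_cases hf : FreeC lam mu P k (i, j)
    · rw [if_pos hf]
      have hr := refl_free hlam hmu hP hf
      rw [Finset.mem_filter, mem_cellFinset hlam]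
      refine ⟨hr.1, ?_⟩
      show bk lam mu P k (i, rIdx lam mu P k i - j) = k
      rw [bk_free hr, refl_refl hlam hmu hP hf]
      omega
    · rw [if_neg hf]
      have hl := notFree_k1 hc hval hf
      have hi1 : 1 ≤ i - 1 := hl.1.1
      have hii : i - 1 + 1 = i := by omega
      have hnf : ¬FreeC lam mu P k (i - 1, j) := by
        intro hfa
        rcases hfa.2 with ⟨hv', hn⟩ | ⟨hv', hn⟩
        · refine hn ⟨?_, ?_⟩
          · show (i - 1 + 1, j) ∈ cells lam mu
            rw [hii]; exact hc
          · show P (i - 1 + 1, j) = k + 1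
            rw [hii]; exact hval
        · have := hl.2
          omega
      rw [Finset.mem_filter, mem_cellFinset hlam]
      refine ⟨hl.1, ?_⟩
      show bk lam mu P k (i - 1, j) = k
      rw [bk_notFree hnf]
      exact hl.2
  · -- left inverse
    rintro ⟨i, j⟩ hp
    rw [Finset.mem_filter, mem_cellFinset hlam] at hp
    obtain ⟨hc, hval⟩ := hp
    by_cases hf : FreeC lam mu P k (i, j)
    · rw [if_pos hf]
      have hr := refl_free hlam hmu hP hf
      rw [if_pos hr, refl_refl hlam hmu hP hf]
    · rw [if_neg hf]
      rw [bk_notFree hf] at hval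
      have hl := notFree_k hc hval hf
      have hnf : ¬FreeC lam mu P k (i + 1, j) := by
        intro hfb
        rcases hfb.2 with ⟨hv', hn⟩ | ⟨hv', hn⟩
        · have := hl.2
          omega
        · exact hn ⟨show ((i + 1) - 1, j) ∈ cells lam mu from hc,
            show P ((i + 1) - 1, j) = k from hval⟩
      rw [if_neg hnf]
      rfl
  · -- right inverse
    rintro ⟨i, j⟩ hq
    rw [Finset.mem_filter, mem_cellFinset hlam] at hq
    obtain ⟨hc, hval⟩ := hq
    by_cases hf : FreeC lam mu P k (i, j)
    · rw [if_pos hf]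
      have hr := refl_free hlam hmu hP hf
      rw [if_pos hr, refl_refl hlam hmu hP hf]
    · rw [if_neg hf]
      have hl := notFree_k1 hc hval hf
      have hi1 : 1 ≤ i - 1 := hl.1.1
      have hii : i - 1 + 1 = i := by omega
      have hnf : ¬FreeC lam mu P k (i - 1, j) := by
        intro hfa
        rcases hfa.2 with ⟨hv', hn⟩ | ⟨hv', hn⟩
        · refine hn ⟨?_, ?_⟩
          · show (i - 1 + 1, j) ∈ cells lam mu
            rw [hii]; exact hc
          · show P (i - 1 + 1, j) = k + 1
            rw [hii]; exact hval
        · have := hl.2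
          omega
      rw [if_neg hnf]
      show (i - 1 + 1, j) = (i, j)
      rw [hii]

lemma cnt_bk_k1 (hlam : IsPartition lam) (hmu : IsPartition mu) (hP : IsSSYT lam mu P) :
    cnt lam mu (bk lam mu P k) (k + 1) = cnt lam mu P k := by
  have h := cnt_bk_k (k := k) hlam hmu (bk_ssyt (k := k) hlam hmu hP)
  rw [bk_bk hlam hmu hP] at h
  exact h.symm

lemma cnt_bk (hlam : IsPartition lam) (hmu : IsPartition mu) (hP : IsSSYT lam mu P)
    (v : ℕ) : cnt lam mu (bk lam mu P k) v = cnt lam mu P (tau k v) := by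
  rw [tau]
  by_cases h1 : v = k
  · subst h1
    rw [if_pos rfl]
    exact cnt_bk_k hlam hmu hP
  · by_cases h2 : v = k + 1
    · subst h2
      rw [if_neg h1, if_pos rfl]
      exact cnt_bk_k1 hlam hmu hP
    · rw [if_neg h1, if_neg h2]
      exact cnt_bk_ne hlam hmu hP h1 h2

end Cnt

section Word

variable {lam mu : ℕ → ℕ}

/-- Apply a sequence of Bender–Knuth moves (head first). -/
noncomputable def applyWord (lam mu : ℕ → ℕ) : List ℕ → (ℕ × ℕ → ℕ) → (ℕ × ℕ → ℕ)
  | [], P => P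
  | a :: l, P => applyWord lam mu l (bk lam mu P a)

/-- Word realizing the reversal `v ↦ n - v` on `{0, …, n}`. -/
def revWord : ℕ → List ℕ
  | 0 => []
  | n + 1 => revWord n ++ (List.range (n + 1)).reverse

def gfun (n v : ℕ) : ℕ := if v = 0 then n + 1 else if v ≤ n + 1 then v - 1 else v

def rho (n v : ℕ) : ℕ := if v ≤ n then n - v else v

lemma applyWord_append (l1 l2 : List ℕ) (P : ℕ × ℕ → ℕ) :
    applyWord lam mu (l1 ++ l2) P = applyWord lam mu l2 (applyWord lam mu l1 P) := by
  induction l1 generalizing P with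
  | nil => rfl
  | cons a l ih =>
    show applyWord lam mu (l ++ l2) (bk lam mu P a) = _
    rw [ih]
    rfl

lemma applyWord_ssyt (hlam : IsPartition lam) (hmu : IsPartition mu) (l : List ℕ)
    {P : ℕ × ℕ → ℕ} (hP : IsSSYT lam mu P) : IsSSYT lam mu (applyWord lam mu l P) := by
  induction l generalizing P with
  | nil => exact hP
  | cons a l ih => exact ih (bk_ssyt hlam hmu hP)

lemma applyWord_reverse_cancel (hlam : IsPartition lam) (hmu : IsPartition mu) (l : List ℕ)
    {P : ℕ × ℕ → ℕ} (hP : IsSSYT lam mu P) :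
    applyWord lam mu l.reverse (applyWord lam mu l P) = P := by
  induction l generalizing P with
  | nil => rfl
  | cons a l ih =>
    rw [show (a :: l).reverse = l.reverse ++ [a] by simp]
    rw [applyWord, applyWord_append]
    rw [ih (bk_ssyt hlam hmu hP)]
    show bk lam mu (bk lam mu P a) a = P
    exact bk_bk hlam hmu hP

lemma applyWord_cancel_reverse (hlam : IsPartition lam) (hmu : IsPartition mu) (l : List ℕ)
    {P : ℕ × ℕ → ℕ} (hP : IsSSYT lam mu P) :
    applyWord lam mu l (applyWord lam mu l.reverse P) = P := by
  induction l generalizing P with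
  | nil => rfl
  | cons a l ih =>
    rw [show (a :: l).reverse = l.reverse ++ [a] by simp]
    rw [applyWord_append, applyWord]
    have hQ : IsSSYT lam mu (applyWord lam mu l.reverse P) :=
      applyWord_ssyt hlam hmu _ hP
    rw [show applyWord lam mu [a] (applyWord lam mu l.reverse P)
        = bk lam mu (applyWord lam mu l.reverse P) a from rfl]
    rw [bk_bk hlam hmu hQ]
    exact ih hP

lemma cnt_applyBlock (hlam : IsPartition lam) (hmu : IsPartition mu) (n : ℕ) :
    ∀ P : ℕ × ℕ → ℕ, IsSSYT lam mu P → ∀ v,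
      cnt lam mu (applyWord lam mu (List.range (n + 1)).reverse P) v
        = cnt lam mu P (gfun n v) := by
  induction n with
  | zero =>
    intro P hP v
    have : (List.range 1).reverse = [0] := rfl
    rw [this]
    show cnt lam mu (bk lam mu P 0) v = cnt lam mu P (gfun 0 v)
    rw [cnt_bk hlam hmu hP v]
    congr 1
    rw [tau, gfun]
    split_ifs <;> omega
  | succ n ih =>
    intro P hP v
    have hrange : (List.range (n + 2)).reverse = (n + 1) :: (List.range (n + 1)).reverse := by
      rw [List.range_succ, List.reverse_append]
      rfl
    rw [hrange]
    show cnt lam mu (applyWord lam mu (List.range (n + 1)).reverse (bk lam mu P (n + 1))) v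
      = cnt lam mu P (gfun (n + 1) v)
    rw [ih (bk lam mu P (n + 1)) (bk_ssyt hlam hmu hP) v]
    rw [cnt_bk hlam hmu hP]
    congr 1
    rw [tau, gfun, gfun]
    split_ifs <;> omega
  
lemma cnt_applyRevWord (hlam : IsPartition lam) (hmu : IsPartition mu) (n : ℕ) :
    ∀ P : ℕ × ℕ → ℕ, IsSSYT lam mu P → ∀ v,
      cnt lam mu (applyWord lam mu (revWord n) P) v = cnt lam mu P (rho n v) := by
  induction n with
  | zero =>
    intro P hP v
    show cnt lam mu P v = cnt lam mu P (rho 0 v)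
    congr 1
    rw [rho]
    split_ifs <;> omega
  | succ n ih =>
    intro P hP v
    rw [revWord, applyWord_append]
    rw [cnt_applyBlock hlam hmu n _ (applyWord_ssyt hlam hmu _ hP) v]
    rw [ih P hP (gfun n v)]
    congr 1
    rw [rho, rho, gfun]
    split_ifs <;> omega

end Word

section Compl

variable {lam mu : ℕ → ℕ}

/-- The complement `p ↦ n - T p` on the cells. -/
noncomputable def cpl (lam mu : ℕ → ℕ) (n : ℕ) (T : ℕ × ℕ → ℕ) : ℕ × ℕ → ℕ :=
  fun p => if p ∈ cells lam mu then n - T p else 0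

lemma cpl_mem {n : ℕ} {T : ℕ × ℕ → ℕ} {p : ℕ × ℕ} (h : p ∈ cells lam mu) :
    cpl lam mu n T p = n - T p := if_pos h

lemma cpl_notmem {n : ℕ} {T : ℕ × ℕ → ℕ} {p : ℕ × ℕ} (h : p ∉ cells lam mu) :
    cpl lam mu n T p = 0 := if_neg h

lemma cpl_rssyt (n : ℕ) {Q : ℕ × ℕ → ℕ} (hQ : IsSSYT lam mu Q)
    (hle : ∀ p ∈ cells lam mu, Q p ≤ n) : IsRSSYT lam mu (cpl lam mu n Q) := by
  refine ⟨fun p hp => if_neg hp, ?_, ?_⟩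
  · intro i j hc hc'
    rw [cpl_mem hc, cpl_mem hc']
    exact Nat.sub_le_sub_left (hQ.2.1 i j hc hc') n
  · intro i j hc hc'
    rw [cpl_mem hc, cpl_mem hc']
    have h1 := hQ.2.2 i j hc hc'
    have h2 := hle _ hc'
    omega

lemma cpl_ssyt (n : ℕ) {R : ℕ × ℕ → ℕ} (hR : IsRSSYT lam mu R)
    (hle : ∀ p ∈ cells lam mu, R p ≤ n) : IsSSYT lam mu (cpl lam mu n R) := by
  refine ⟨fun p hp => if_neg hp, ?_, ?_⟩
  · intro i j hc hc'
    rw [cpl_mem hc, cpl_mem hc']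
    exact Nat.sub_le_sub_left (hR.2.1 i j hc hc') n
  · intro i j hc hc'
    rw [cpl_mem hc, cpl_mem hc']
    have h1 := hR.2.2 i j hc hc'
    have h2 := hle _ hc
    omega

lemma cpl_cpl (n : ℕ) {T : ℕ × ℕ → ℕ} (hfill : IsFilling lam mu T)
    (hle : ∀ p ∈ cells lam mu, T p ≤ n) : cpl lam mu n (cpl lam mu n T) = T := by
  funext p
  by_cases h : p ∈ cells lam mu
  · rw [cpl_mem h, cpl_mem h]
    have := hle p h
    omega
  · rw [cpl_notmem h]
    exact (hfill p h).symm

lemma sum_fiber (hlam : IsPartition lam) (T : ℕ × ℕ → ℕ) {n : ℕ}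
    (hle : ∀ p ∈ cells lam mu, T p ≤ n) (f : ℕ → ℕ) :
    ∑ p ∈ cellFinset lam mu, f (T p)
      = ∑ v ∈ Finset.range (n + 1), f v * cnt lam mu T v := by
  rw [← Finset.sum_fiberwise_of_maps_to (g := T) (t := Finset.range (n + 1))
    (fun p hp => Finset.mem_range.2
      (by have := hle p ((mem_cellFinset hlam).1 hp); omega)) (fun p => f (T p))]
  apply Finset.sum_congr rfl
  intro v _
  calc ∑ p ∈ (cellFinset lam mu).filter (fun p => T p = v), f (T p)
      = ∑ p ∈ (cellFinset lam mu).filter (fun p => T p = v), f v := by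
        apply Finset.sum_congr rfl
        intro p hp
        rw [(Finset.mem_filter.1 hp).2]
    _ = f v * cnt lam mu T v := by
        rw [Finset.sum_const, cnt, smul_eq_mul, Nat.mul_comm]

lemma cnt_zero_of_gt (hlam : IsPartition lam) {T : ℕ × ℕ → ℕ} {n : ℕ}
    (hle : ∀ p ∈ cells lam mu, T p ≤ n) {v : ℕ} (h : n < v) : cnt lam mu T v = 0 := by
  rw [cnt, Finset.card_eq_zero, Finset.filter_eq_empty_iff]
  intro p hp
  have := hle p ((mem_cellFinset hlam).1 hp)
  omega

lemma le_of_cnt_zero (hlam : IsPartition lam) {T : ℕ × ℕ → ℕ} {n : ℕ}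
    (h : ∀ v, n < v → cnt lam mu T v = 0) : ∀ p ∈ cells lam mu, T p ≤ n := by
  intro p hp
  by_contra hgt
  push_neg at hgt
  have h0 := h (T p) hgt
  rw [cnt, Finset.card_eq_zero] at h0
  have hmem : p ∈ (cellFinset lam mu).filter (fun q => T q = T p) :=
    Finset.mem_filter.2 ⟨(mem_cellFinset hlam).2 hp, rfl⟩
  rw [h0] at hmem
  exact absurd hmem (Finset.notMem_empty p)

end Compl

section FwdBwd

variable {lam mu : ℕ → ℕ}

/-- The forward norm-preserving map from SSYT of norm `m` to reverse SSYT of norm `m`. -/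
noncomputable def fwdT (lam mu : ℕ → ℕ) (m : ℕ) (T : ℕ × ℕ → ℕ) : ℕ × ℕ → ℕ :=
  cpl lam mu m (applyWord lam mu (revWord m) T)

/-- The backward map. -/
noncomputable def bwdT (lam mu : ℕ → ℕ) (m : ℕ) (T : ℕ × ℕ → ℕ) : ℕ × ℕ → ℕ :=
  applyWord lam mu (revWord m).reverse (cpl lam mu m T)

lemma applyWord_le (hlam : IsPartition lam) (hmu : IsPartition mu) {m : ℕ} {P : ℕ × ℕ → ℕ}
    (hP : IsSSYT lam mu P) (hPle : ∀ p ∈ cells lam mu, P p ≤ m) :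
    ∀ p ∈ cells lam mu, applyWord lam mu (revWord m) P p ≤ m := by
  apply le_of_cnt_zero hlam
  intro v hv
  rw [cnt_applyRevWord hlam hmu m P hP v,
    show rho m v = v from by rw [rho]; split_ifs <;> omega]
  exact cnt_zero_of_gt hlam hPle hv

lemma fwd_spec (hlam : IsPartition lam) (hmu : IsPartition mu) {m : ℕ} {P : ℕ × ℕ → ℕ}
    (hP : IsSSYT lam mu P) (hm : tnorm lam mu P = m) :
    IsRSSYT lam mu (fwdT lam mu m P) ∧ tnorm lam mu (fwdT lam mu m P) = m := by
  have hPle : ∀ p ∈ cells lam mu, P p ≤ m := fun p hp => hm ▸ entry_le_tnorm hlam hp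
  have hQ : IsSSYT lam mu (applyWord lam mu (revWord m) P) := applyWord_ssyt hlam hmu _ hP
  have hcnt : ∀ v, cnt lam mu (applyWord lam mu (revWord m) P) v = cnt lam mu P (rho m v) :=
    cnt_applyRevWord hlam hmu m P hP
  have hQle := applyWord_le hlam hmu hP hPle
  refine ⟨cpl_rssyt m hQ hQle, ?_⟩
  have e1 : tnorm lam mu (fwdT lam mu m P)
      = ∑ p ∈ cellFinset lam mu, (m - applyWord lam mu (revWord m) P p) := by
    rw [tnorm_eq_sum hlam]
    apply Finset.sum_congr rfl
    intro p hp
    exact cpl_mem ((mem_cellFinset hlam).1 hp)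
  have e2 : ∑ p ∈ cellFinset lam mu, (m - applyWord lam mu (revWord m) P p)
      = ∑ v ∈ Finset.range (m + 1), (m - v) * cnt lam mu (applyWord lam mu (revWord m) P) v :=
    sum_fiber hlam _ hQle (fun v => m - v)
  have e3 : ∑ v ∈ Finset.range (m + 1), (m - v) * cnt lam mu (applyWord lam mu (revWord m) P) v
      = ∑ v ∈ Finset.range (m + 1), (m - v) * cnt lam mu P (m - v) := by
    apply Finset.sum_congr rfl
    intro v hv
    rw [Finset.mem_range] at hv
    rw [hcnt v, show rho m v = m - v from by rw [rho, if_pos (by omega)]]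
  have e4 : ∑ v ∈ Finset.range (m + 1), (m - v) * cnt lam mu P (m - v)
      = ∑ v ∈ Finset.range (m + 1), v * cnt lam mu P v := by
    rw [← Finset.sum_range_reflect (fun v => v * cnt lam mu P v) (m + 1)]
    apply Finset.sum_congr rfl
    intro j hj
    rw [Finset.mem_range] at hj
    rw [show m + 1 - 1 - j = m - j from by omega]
  have e5 : ∑ v ∈ Finset.range (m + 1), v * cnt lam mu P v = m := by
    rw [← sum_fiber hlam P hPle (fun v => v), ← tnorm_eq_sum hlam]
    exact hm
  rw [e1, e2, e3, e4, e5]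

lemma bwd_spec (hlam : IsPartition lam) (hmu : IsPartition mu) {m : ℕ} {R : ℕ × ℕ → ℕ}
    (hR : IsRSSYT lam mu R) (hm : tnorm lam mu R = m) :
    IsSSYT lam mu (bwdT lam mu m R) ∧ tnorm lam mu (bwdT lam mu m R) = m := by
  have hRle : ∀ p ∈ cells lam mu, R p ≤ m := fun p hp => hm ▸ entry_le_tnorm hlam hp
  have hQ : IsSSYT lam mu (cpl lam mu m R) := cpl_ssyt m hR hRle
  have hQle : ∀ p ∈ cells lam mu, cpl lam mu m R p ≤ m := by
    intro p hp
    rw [cpl_mem hp]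
    omega
  have hP : IsSSYT lam mu (bwdT lam mu m R) := applyWord_ssyt hlam hmu _ hQ
  have hQP : applyWord lam mu (revWord m) (bwdT lam mu m R) = cpl lam mu m R :=
    applyWord_cancel_reverse hlam hmu _ hQ
  have hcnt : ∀ v, cnt lam mu (cpl lam mu m R) v = cnt lam mu (bwdT lam mu m R) (rho m v) := by
    intro v
    rw [← hQP]
    exact cnt_applyRevWord hlam hmu m _ hP v
  have hPle : ∀ p ∈ cells lam mu, bwdT lam mu m R p ≤ m := by
    apply le_of_cnt_zero hlam
    intro v hv
    have h0 := hcnt v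
    rw [show rho m v = v from by rw [rho]; split_ifs <;> omega] at h0
    rw [← h0]
    exact cnt_zero_of_gt hlam hQle hv
  refine ⟨hP, ?_⟩
  have e1 : tnorm lam mu (bwdT lam mu m R)
      = ∑ v ∈ Finset.range (m + 1), v * cnt lam mu (bwdT lam mu m R) v := by
    rw [tnorm_eq_sum hlam]
    exact sum_fiber hlam _ hPle (fun v => v)
  have e2 : ∑ v ∈ Finset.range (m + 1), v * cnt lam mu (bwdT lam mu m R) v
      = ∑ v ∈ Finset.range (m + 1), v * cnt lam mu (cpl lam mu m R) (m - v) := by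
    apply Finset.sum_congr rfl
    intro v hv
    rw [Finset.mem_range] at hv
    have h0 := hcnt (m - v)
    rw [show rho m (m - v) = v from by rw [rho, if_pos (by omega)]; omega] at h0
    rw [h0]
  have e3 : ∑ v ∈ Finset.range (m + 1), v * cnt lam mu (cpl lam mu m R) (m - v)
      = ∑ v ∈ Finset.range (m + 1), (m - v) * cnt lam mu (cpl lam mu m R) v := by
    rw [← Finset.sum_range_reflect (fun v => (m - v) * cnt lam mu (cpl lam mu m R) v) (m + 1)]
    apply Finset.sum_congr rfl
    intro j hj
    rw [Finset.mem_range] at hj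
    rw [show m + 1 - 1 - j = m - j from by omega]
    congr 1
    omega
  have e4 : ∑ v ∈ Finset.range (m + 1), (m - v) * cnt lam mu (cpl lam mu m R) v
      = ∑ p ∈ cellFinset lam mu, (m - cpl lam mu m R p) :=
    (sum_fiber hlam _ hQle (fun v => m - v)).symm
  have e5 : ∑ p ∈ cellFinset lam mu, (m - cpl lam mu m R p) = m := by
    rw [Finset.sum_congr rfl (fun p hp => ?_), ← tnorm_eq_sum hlam (T := R)]
    · exact hm
    · have hpc := (mem_cellFinset hlam).1 hp
      rw [cpl_mem hpc]
      have := hRle p hpc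
      show m - (m - R p) = R p
      omega
  rw [e1, e2, e3, e4, e5]

lemma bwd_fwd (hlam : IsPartition lam) (hmu : IsPartition mu) {m : ℕ} {P : ℕ × ℕ → ℕ}
    (hP : IsSSYT lam mu P) (hm : tnorm lam mu P = m) :
    bwdT lam mu m (fwdT lam mu m P) = P := by
  have hPle : ∀ p ∈ cells lam mu, P p ≤ m := fun p hp => hm ▸ entry_le_tnorm hlam hp
  have hQ : IsSSYT lam mu (applyWord lam mu (revWord m) P) := applyWord_ssyt hlam hmu _ hP
  have hQle := applyWord_le hlam hmu hP hPle
  show applyWord lam mu (revWord m).reverse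
    (cpl lam mu m (cpl lam mu m (applyWord lam mu (revWord m) P))) = P
  rw [cpl_cpl m hQ.1 hQle]
  exact applyWord_reverse_cancel hlam hmu _ hP

lemma fwd_bwd (hlam : IsPartition lam) (hmu : IsPartition mu) {m : ℕ} {R : ℕ × ℕ → ℕ}
    (hR : IsRSSYT lam mu R) (hm : tnorm lam mu R = m) :
    fwdT lam mu m (bwdT lam mu m R) = R := by
  have hRle : ∀ p ∈ cells lam mu, R p ≤ m := fun p hp => hm ▸ entry_le_tnorm hlam hp
  have hQ : IsSSYT lam mu (cpl lam mu m R) := cpl_ssyt m hR hRle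
  show cpl lam mu m (applyWord lam mu (revWord m)
    (applyWord lam mu (revWord m).reverse (cpl lam mu m R))) = R
  rw [applyWord_cancel_reverse hlam hmu _ hQ]
  exact cpl_cpl m hR.1 hRle

end FwdBwd

/-- A norm-preserving bijection between SSYT and reverse
SSYT of the same skew shape; in particular, for each `m` the number of SSYT of
norm `m` equals the number of reverse SSYT of norm `m`. -/
theorem stmt2 (lam mu : ℕ → ℕ)
    (hlam : IsPartition lam) (hmu : IsPartition mu) (hsub : ∀ i, mu i ≤ lam i) :
    (∃ f : {P : ℕ × ℕ → ℕ // IsSSYT lam mu P} ≃ {R : ℕ × ℕ → ℕ // IsRSSYT lam mu R},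
      ∀ P, tnorm lam mu (f P).1 = tnorm lam mu P.1) ∧
    (∀ m : ℕ, {P | IsSSYT lam mu P ∧ tnorm lam mu P = m}.ncard =
      {R | IsRSSYT lam mu R ∧ tnorm lam mu R = m}.ncard) := by
  constructor
  · refine ⟨{
      toFun := fun P => ⟨fwdT lam mu (tnorm lam mu P.1) P.1,
        (fwd_spec hlam hmu P.2 rfl).1⟩
      invFun := fun R => ⟨bwdT lam mu (tnorm lam mu R.1) R.1,
        (bwd_spec hlam hmu R.2 rfl).1⟩
      left_inv := ?_
      right_inv := ?_ }, ?_⟩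
    · intro P
      apply Subtype.ext
      show bwdT lam mu (tnorm lam mu (fwdT lam mu (tnorm lam mu P.1) P.1))
        (fwdT lam mu (tnorm lam mu P.1) P.1) = P.1
      rw [(fwd_spec hlam hmu P.2 rfl).2]
      exact bwd_fwd hlam hmu P.2 rfl
    · intro R
      apply Subtype.ext
      show fwdT lam mu (tnorm lam mu (bwdT lam mu (tnorm lam mu R.1) R.1))
        (bwdT lam mu (tnorm lam mu R.1) R.1) = R.1
      rw [(bwd_spec hlam hmu R.2 rfl).2]
      exact fwd_bwd hlam hmu R.2 rfl
    · intro P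
      exact (fwd_spec hlam hmu P.2 rfl).2
  · intro m
    have e : {P : ℕ × ℕ → ℕ // IsSSYT lam mu P ∧ tnorm lam mu P = m} ≃
        {R : ℕ × ℕ → ℕ // IsRSSYT lam mu R ∧ tnorm lam mu R = m} :=
      { toFun := fun P => ⟨fwdT lam mu m P.1,
          (fwd_spec hlam hmu P.2.1 P.2.2).1, (fwd_spec hlam hmu P.2.1 P.2.2).2⟩
        invFun := fun R => ⟨bwdT lam mu m R.1,
          (bwd_spec hlam hmu R.2.1 R.2.2).1, (bwd_spec hlam hmu R.2.1 R.2.2).2⟩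
        left_inv := fun P => Subtype.ext (bwd_fwd hlam hmu P.2.1 P.2.2)
        right_inv := fun R => Subtype.ext (fwd_bwd hlam hmu R.2.1 R.2.2) }
    rw [← Nat.card_coe_set_eq, ← Nat.card_coe_set_eq]
    exact Nat.card_congr e
end

section
/- For any skew shape λ/μ, the number of semistandard Young tableaux of shape λ/μ with entries in {0,1,...,N} equals the number of reverse semistandard Young tableaux of shape λ/μ with entries in {0,1,...,N}, and moreover the correspondence can be chosen to preserve the sum of entries. -/
open scoped Classical

set_option linter.unusedSectionVars false
set_option linter.unusedVariables false
set_option linter.deprecated false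

namespace BK

lemma rank_filter_card (F : Finset ℕ) (b : ℕ) (hb : b ≤ F.card) :
    (F.filter (fun j => (F.filter (· < j)).card < b)).card = b := by
  set r : ℕ → ℕ := fun j => (F.filter (· < j)).card with hr
  have hmono : ∀ j1 ∈ F, ∀ j2 ∈ F, j1 < j2 → r j1 < r j2 := by
    intro j1 h1 j2 h2 h12
    apply Finset.card_lt_card
    constructor
    · intro x hx
      simp only [Finset.mem_filter] at *
      exact ⟨hx.1, by omega⟩
    · intro hsub
      have : j1 ∈ F.filter (· < j2) := by simp [h1, h12]
      have := hsub this
      simp at this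
  have hinj : Set.InjOn r F := by
    intro j1 h1 j2 h2 he
    rcases lt_trichotomy j1 j2 with h | h | h
    · exact absurd he (by have := hmono j1 h1 j2 h2 h; omega)
    · exact h
    · exact absurd he (by have := hmono j2 h2 j1 h1 h; omega)
  have hlt : ∀ j ∈ F, r j < F.card := by
    intro j hj
    have : F.filter (· < j) ⊆ F.erase j := by
      intro x hx
      simp only [Finset.mem_filter] at hx
      exact Finset.mem_erase.2 ⟨by omega, hx.1⟩
    calc r j ≤ (F.erase j).card := Finset.card_le_card this
    _ < F.card := Finset.card_erase_lt_of_mem hj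
  have himg : F.image r = Finset.range F.card := by
    apply Finset.eq_of_subset_of_card_le
    · intro x hx
      simp only [Finset.mem_image] at hx
      obtain ⟨j, hj, he⟩ := hx
      simpa [← he] using hlt j hj
    · rw [Finset.card_range, Finset.card_image_of_injOn hinj]
  have key : (F.filter (fun j => r j < b)).image r = (Finset.range b) := by
    ext x
    simp only [Finset.mem_image, Finset.mem_filter, Finset.mem_range]
    constructor
    · rintro ⟨j, ⟨hj, hjb⟩, he⟩; omega
    · intro hx
      have : x ∈ F.image r := by rw [himg]; simp; omega
      simp only [Finset.mem_image] at this
      obtain ⟨j, hj, he⟩ := this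
      exact ⟨j, ⟨hj, by omega⟩, he⟩
  have h2 : Set.InjOn r (F.filter (fun j => r j < b)) :=
    hinj.mono (fun x hx => (Finset.mem_filter.1 hx).1)
  have := Finset.card_image_of_injOn h2
  rw [key] at this
  simpa using this.symm

section
variable {lam mu : ℕ → ℕ}

lemma cells_finite (hlam : IsPartition lam) : (cells lam mu).Finite := by
  obtain ⟨R, hR⟩ := hlam.2
  apply Set.Finite.subset (Set.finite_Icc ((1:ℕ),(1:ℕ)) (R, lam 1))
  rintro ⟨i, j⟩ ⟨hi, hj1, hj2⟩
  simp only [Set.mem_Icc, Prod.mk_le_mk] at *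
  have hj : 1 ≤ j := Nat.lt_of_le_of_lt (Nat.zero_le _) hj1
  have : lam i ≠ 0 := by omega
  have hiR : i ≤ R := by
    by_contra h
    exact this (hR i (by omega))
  exact ⟨⟨hi, hj⟩, hiR, le_trans hj2 (hlam.1 1 i hi)⟩

noncomputable def cellsF (lam mu : ℕ → ℕ) : Finset (ℕ × ℕ) :=
  if h : (cells lam mu).Finite then h.toFinset else ∅

lemma mem_cellsF (hlam : IsPartition lam) {p : ℕ × ℕ} :
    p ∈ cellsF lam mu ↔ p ∈ cells lam mu := by
  rw [cellsF, dif_pos (cells_finite hlam)]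
  exact Set.Finite.mem_toFinset _

lemma mem_cells {i j : ℕ} : (i, j) ∈ cells lam mu ↔ 1 ≤ i ∧ mu i < j ∧ j ≤ lam i :=
  Iff.rfl

lemma cell_down (hmu : IsPartition mu) {i j j0 : ℕ} (h1 : (i, j) ∈ cells lam mu)
    (h2 : (i+1, j0) ∈ cells lam mu) (hj : j ≤ j0) : (i+1, j) ∈ cells lam mu := by
  rw [mem_cells] at *
  have := hmu.1 i (i+1) (by omega)
  omega

lemma cell_up (hlam : IsPartition lam) {i j j0 : ℕ} (h1 : (i+1, j) ∈ cells lam mu)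
    (h2 : (i, j0) ∈ cells lam mu) (hj : j0 ≤ j) : (i, j) ∈ cells lam mu := by
  rw [mem_cells] at *
  have := hlam.1 i (i+1) (by omega)
  omega

lemma rowMono {P : ℕ × ℕ → ℕ} (hP : IsSSYT lam mu P) {i j j' : ℕ}
    (h1 : (i, j) ∈ cells lam mu) (h2 : (i, j') ∈ cells lam mu) (hj : j ≤ j') :
    P (i, j) ≤ P (i, j') := by
  induction j' , hj using Nat.le_induction with
  | base => exact le_rfl
  | succ m hm ih =>
    have hmem : (i, m) ∈ cells lam mu := by
      rw [mem_cells] at *; omega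
    exact le_trans (ih hmem) (hP.2.1 i m hmem h2)

/-- A free cell for the Bender–Knuth move at `k`. -/
def freeCell (lam mu : ℕ → ℕ) (P : ℕ × ℕ → ℕ) (k i j : ℕ) : Prop :=
  (i, j) ∈ cells lam mu ∧
  ((P (i, j) = k ∧ ¬((i+1, j) ∈ cells lam mu ∧ P (i+1, j) = k+1)) ∨
   (P (i, j) = k+1 ∧ ¬((i-1, j) ∈ cells lam mu ∧ P (i-1, j) = k)))

/-- The set of free columns in row `i`. -/
noncomputable def rowF (lam mu : ℕ → ℕ) (P : ℕ × ℕ → ℕ) (k i : ℕ) : Finset ℕ :=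
  ((cellsF lam mu).filter (fun p => p.1 = i ∧ freeCell lam mu P k i p.2)).image Prod.snd

noncomputable def rnk (lam mu : ℕ → ℕ) (P : ℕ × ℕ → ℕ) (k i j : ℕ) : ℕ :=
  ((rowF lam mu P k i).filter (· < j)).card

noncomputable def bnum (lam mu : ℕ → ℕ) (P : ℕ × ℕ → ℕ) (k i : ℕ) : ℕ :=
  ((rowF lam mu P k i).filter (fun j => P (i, j) = k+1)).card

noncomputable def anum (lam mu : ℕ → ℕ) (P : ℕ × ℕ → ℕ) (k i : ℕ) : ℕ :=
  ((rowF lam mu P k i).filter (fun j => P (i, j) = k)).card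

/-- The Bender–Knuth involution at `k`. -/
noncomputable def bk (lam mu : ℕ → ℕ) (P : ℕ × ℕ → ℕ) (k : ℕ) : ℕ × ℕ → ℕ :=
  fun q => if freeCell lam mu P k q.1 q.2 then
    (if rnk lam mu P k q.1 q.2 < bnum lam mu P k q.1 then k else k + 1)
  else P q

variable {P : ℕ × ℕ → ℕ} {k : ℕ}

lemma mem_rowF (hlam : IsPartition lam) {i j : ℕ} :
    j ∈ rowF lam mu P k i ↔ freeCell lam mu P k i j := by
  simp only [rowF, Finset.mem_image, Finset.mem_filter]
  constructor
  · rintro ⟨⟨i', j'⟩, ⟨hc, rfl, hf⟩, rfl⟩; exact hf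
  · intro hf
    exact ⟨(i, j), ⟨(mem_cellsF hlam).2 hf.1, rfl, hf⟩, rfl⟩

lemma free_val {i j : ℕ} (h : freeCell lam mu P k i j) :
    P (i, j) = k ∨ P (i, j) = k + 1 := by
  rcases h.2 with ⟨h, _⟩ | ⟨h, _⟩
  · exact Or.inl h
  · exact Or.inr h

lemma free_mem {i j : ℕ} (h : freeCell lam mu P k i j) : (i, j) ∈ cells lam mu := h.1

lemma bk_val {i j : ℕ} (h : freeCell lam mu P k i j) :
    bk lam mu P k (i, j) = k ∨ bk lam mu P k (i, j) = k + 1 := by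
  rw [bk]; simp only [h, if_true]
  split <;> simp

lemma bk_not_free {i j : ℕ} (h : ¬ freeCell lam mu P k i j) :
    bk lam mu P k (i, j) = P (i, j) := by
  rw [bk, if_neg h]

/-- Non-free `k`s propagate leftwards: if column `j1` holds a non-free `k`,
any `k` in the same row at column `j0 ≤ j1` is also non-free. -/
lemma nonfree_k_mono (hlam : IsPartition lam) (hmu : IsPartition mu)
    (hP : IsSSYT lam mu P) {i j0 j1 : ℕ}
    (h0 : (i, j0) ∈ cells lam mu) (h1 : (i, j1) ∈ cells lam mu) (hj : j0 ≤ j1)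
    (hv0 : P (i, j0) = k) (hd : (i+1, j1) ∈ cells lam mu) (hdv : P (i+1, j1) = k+1) :
    (i+1, j0) ∈ cells lam mu ∧ P (i+1, j0) = k+1 := by
  have hc : (i+1, j0) ∈ cells lam mu := cell_down hmu h0 hd hj
  have hlt : P (i, j0) < P (i+1, j0) := hP.2.2 i j0 h0 hc
  have hle : P (i+1, j0) ≤ P (i+1, j1) := rowMono hP hc hd hj
  exact ⟨hc, by omega⟩

/-- Non-free `k+1`s propagate rightwards. -/
lemma nonfree_k1_mono (hlam : IsPartition lam) (hmu : IsPartition mu)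
    (hP : IsSSYT lam mu P) {i j0 j1 : ℕ}
    (h0 : (i+1, j0) ∈ cells lam mu) (h1 : (i+1, j1) ∈ cells lam mu) (hj : j0 ≤ j1)
    (hv1 : P (i+1, j1) = k+1) (hu : (i, j0) ∈ cells lam mu) (huv : P (i, j0) = k) :
    (i, j1) ∈ cells lam mu ∧ P (i, j1) = k := by
  have hc : (i, j1) ∈ cells lam mu := cell_up hlam h1 hu hj
  have hlt : P (i, j1) < P (i+1, j1) := hP.2.2 i j1 hc h1
  have hle : P (i, j0) ≤ P (i, j1) := rowMono hP hu hc hj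
  exact ⟨hc, by omega⟩

/-- In a row, free `k`s come before free `k+1`s. -/
lemma free_k_lt_free_k1 (hP : IsSSYT lam mu P) {i jA jB : ℕ}
    (hA : freeCell lam mu P k i jA) (hvA : P (i, jA) = k)
    (hB : freeCell lam mu P k i jB) (hvB : P (i, jB) = k+1) : jA < jB := by
  by_contra h
  have := rowMono hP hB.1 hA.1 (by omega)
  omega

/-- characterization of the value of `P` on free cells by rank. -/
lemma P_free_char (hlam : IsPartition lam) (hP : IsSSYT lam mu P) {i j : ℕ}
    (h : freeCell lam mu P k i j) :
    P (i, j) = k ↔ rnk lam mu P k i j < anum lam mu P k i := by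
  constructor
  · intro hv
    have hsub : (rowF lam mu P k i).filter (· < j) ⊆
        ((rowF lam mu P k i).filter (fun j' => P (i, j') = k)).erase j := by
      intro j' hj'
      simp only [Finset.mem_filter, mem_rowF hlam] at hj'
      obtain ⟨hf', hlt'⟩ := hj'
      rcases free_val hf' with hv' | hv'
      · exact Finset.mem_erase.2 ⟨by omega, Finset.mem_filter.2 ⟨(mem_rowF hlam).2 hf', hv'⟩⟩
      · exact absurd (free_k_lt_free_k1 hP h hv hf' hv') (by omega)
    have hmem : j ∈ (rowF lam mu P k i).filter (fun j' => P (i, j') = k) :=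
      Finset.mem_filter.2 ⟨(mem_rowF hlam).2 h, hv⟩
    calc rnk lam mu P k i j ≤ _ := Finset.card_le_card hsub
    _ < anum lam mu P k i := Finset.card_erase_lt_of_mem hmem
  · intro hrnk
    by_contra hv
    rcases free_val h with hv' | hv'
    · exact hv hv'
    have hsub : (rowF lam mu P k i).filter (fun j' => P (i, j') = k) ⊆
        (rowF lam mu P k i).filter (· < j) := by
      intro j' hj'
      simp only [Finset.mem_filter, mem_rowF hlam] at hj' ⊢
      exact ⟨hj'.1, free_k_lt_free_k1 hP hj'.1 hj'.2 h hv'⟩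
    have := Finset.card_le_card hsub
    rw [rnk] at hrnk
    rw [anum] at hrnk
    omega

lemma rowF_card (hlam : IsPartition lam) {i : ℕ} :
    (rowF lam mu P k i).card = anum lam mu P k i + bnum lam mu P k i := by
  rw [anum, bnum, ← Finset.card_filter_add_card_filter_not
    (p := fun j => P (i, j) = k)]
  congr 1
  apply Finset.card_bij (fun j _ => j)
  · intro j hj
    simp only [Finset.mem_filter, mem_rowF hlam] at *
    obtain ⟨hf, hv⟩ := hj
    rcases free_val hf with hv' | hv'
    · exact absurd hv' hv
    · exact ⟨hf, hv'⟩
  · intro a b _ _ h; exact h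
  · intro j hj
    simp only [Finset.mem_filter, mem_rowF hlam] at *
    exact ⟨j, ⟨hj.1, by omega⟩, rfl⟩

lemma bnum_le_card (hlam : IsPartition lam) {i : ℕ} :
    bnum lam mu P k i ≤ (rowF lam mu P k i).card :=
  Finset.card_le_card (Finset.filter_subset _ _)

/-- The number of free cells given value `k` by `bk` is `bnum`. -/
lemma bk_k_count (hlam : IsPartition lam) {i : ℕ} :
    ((rowF lam mu P k i).filter (fun j => bk lam mu P k (i, j) = k)).card
      = bnum lam mu P k i := by
  have : (rowF lam mu P k i).filter (fun j => bk lam mu P k (i, j) = k)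
      = (rowF lam mu P k i).filter
        (fun j => ((rowF lam mu P k i).filter (· < j)).card < bnum lam mu P k i) := by
    apply Finset.filter_congr
    intro j hj
    rw [mem_rowF hlam] at hj
    rw [bk]
    simp only [hj, if_true]
    split <;> simp_all [rnk]
  rw [this, rank_filter_card _ _ (bnum_le_card hlam)]

lemma not_free_k {i j : ℕ} (hmem : (i, j) ∈ cells lam mu) (hv : P (i, j) = k)
    (hnf : ¬ freeCell lam mu P k i j) : (i+1, j) ∈ cells lam mu ∧ P (i+1, j) = k+1 := by
  rw [freeCell] at hnf
  push_neg at hnf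
  rcases hnf hmem with ⟨h1, h2⟩
  by_contra hc
  exact absurd hv (by_contra (fun _ => hc (h1 hv)))

lemma not_free_k1 {i j : ℕ} (hmem : (i, j) ∈ cells lam mu) (hv : P (i, j) = k+1)
    (hnf : ¬ freeCell lam mu P k i j) : (i-1, j) ∈ cells lam mu ∧ P (i-1, j) = k := by
  rw [freeCell] at hnf
  push_neg at hnf
  rcases hnf hmem with ⟨h1, h2⟩
  by_contra hc
  exact absurd hv (by_contra (fun _ => hc (h2 hv)))

variable (hlam : IsPartition lam) (hmu : IsPartition mu) (hP : IsSSYT lam mu P)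
include hlam hmu hP

/-- Rows of `bk P` are weakly increasing. -/
lemma bk_row {i j : ℕ} (h1 : (i, j) ∈ cells lam mu) (h2 : (i, j+1) ∈ cells lam mu) :
    bk lam mu P k (i, j) ≤ bk lam mu P k (i, j+1) := by
  by_cases hf1 : freeCell lam mu P k i j <;> by_cases hf2 : freeCell lam mu P k i (j+1)
  · -- both free
    have hr : rnk lam mu P k i j ≤ rnk lam mu P k i (j+1) := by
      apply Finset.card_le_card
      intro x hx
      simp only [Finset.mem_filter] at hx ⊢
      exact ⟨hx.1, by omega⟩
    rw [bk, bk]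
    simp only [hf1, hf2, if_true]
    split_ifs <;> omega
  · -- j free, j+1 not free
    have hle : P (i, j) ≤ P (i, j+1) := hP.2.1 i j h1 h2
    have hv1 := free_val hf1
    have hk1 : k + 1 ≤ P (i, j+1) := by
      by_contra hc
      have hvj1 : P (i, j+1) = k := by omega
      have hvj : P (i, j) = k := by omega
      obtain ⟨hd, hdv⟩ := not_free_k h2 hvj1 hf2
      obtain ⟨hc1, hc2⟩ := nonfree_k_mono hlam hmu hP h1 h2 (by omega) hvj hd hdv
      rcases hf1.2 with ⟨_, hn⟩ | ⟨hx, _⟩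
      · exact hn ⟨hc1, hc2⟩
      · omega
    rw [bk_not_free hf2]
    rcases bk_val hf1 with hb | hb <;> rw [hb] <;> omega
  · -- j not free, j+1 free
    have hle : P (i, j) ≤ P (i, j+1) := hP.2.1 i j h1 h2
    have hv2 := free_val hf2
    have hk1 : P (i, j) ≤ k := by
      by_contra hc
      have hvj : P (i, j) = k+1 := by omega
      have hvj1 : P (i, j+1) = k+1 := by omega
      obtain ⟨hu, huv⟩ := not_free_k1 h1 hvj hf1
      have hi1 : 1 ≤ i := h1.1
      obtain ⟨m, rfl⟩ : ∃ m, i = m + 1 := ⟨i - 1, by omega⟩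
      have hm : m + 1 - 1 = m := by omega
      rw [hm] at hu huv
      obtain ⟨hc1, hc2⟩ := nonfree_k1_mono hlam hmu hP h1 h2 (by omega) hvj1 hu huv
      rcases hf2.2 with ⟨hx, _⟩ | ⟨_, hn⟩
      · omega
      · exact hn ⟨by simpa using hc1, by simpa using hc2⟩
    rw [bk_not_free hf1]
    rcases bk_val hf2 with hb | hb <;> rw [hb] <;> omega
  · rw [bk_not_free hf1, bk_not_free hf2]
    exact hP.2.1 i j h1 h2

lemma not_both_free {i j : ℕ} (h1 : (i, j) ∈ cells lam mu) (h2 : (i+1, j) ∈ cells lam mu)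
    (hf1 : freeCell lam mu P k i j) (hf2 : freeCell lam mu P k (i+1) j) : False := by
  have hlt : P (i, j) < P (i+1, j) := hP.2.2 i j h1 h2
  have hv1 := free_val hf1
  have hv2 := free_val hf2
  have hvt : P (i, j) = k := by omega
  have hvb : P (i+1, j) = k+1 := by omega
  rcases hf1.2 with ⟨_, hn⟩ | ⟨hx, _⟩
  · exact hn ⟨h2, hvb⟩
  · omega

lemma col_top_free_bot_not {i j : ℕ} (h1 : (i, j) ∈ cells lam mu)
    (h2 : (i+1, j) ∈ cells lam mu) (hf1 : freeCell lam mu P k i j)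
    (hf2 : ¬ freeCell lam mu P k (i+1) j) : k + 2 ≤ P (i+1, j) := by
  have hlt : P (i, j) < P (i+1, j) := hP.2.2 i j h1 h2
  have hv1 := free_val hf1
  by_contra hc
  have hvb : P (i+1, j) = k+1 := by omega
  have hvt : P (i, j) = k := by omega
  rcases hf1.2 with ⟨_, hn⟩ | ⟨hx, _⟩
  · exact hn ⟨h2, hvb⟩
  · omega

lemma col_top_not_bot_free {i j : ℕ} (h1 : (i, j) ∈ cells lam mu)
    (h2 : (i+1, j) ∈ cells lam mu) (hf1 : ¬ freeCell lam mu P k i j)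
    (hf2 : freeCell lam mu P k (i+1) j) : P (i, j) < k := by
  have hlt : P (i, j) < P (i+1, j) := hP.2.2 i j h1 h2
  have hv2 := free_val hf2
  by_contra hc
  have hvt : P (i, j) = k := by omega
  have hvb : P (i+1, j) = k+1 := by omega
  rcases hf2.2 with ⟨hx, _⟩ | ⟨_, hn⟩
  · omega
  · exact hn ⟨by simpa using h1, by simpa using hvt⟩

/-- Columns of `bk P` are strictly increasing. -/
lemma bk_col {i j : ℕ} (h1 : (i, j) ∈ cells lam mu) (h2 : (i+1, j) ∈ cells lam mu) :
    bk lam mu P k (i, j) < bk lam mu P k (i+1, j) := by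
  by_cases hf1 : freeCell lam mu P k i j <;> by_cases hf2 : freeCell lam mu P k (i+1) j
  · exact absurd (not_both_free hlam hmu hP h1 h2 hf1 hf2) (fun h => h)
  · have := col_top_free_bot_not hlam hmu hP h1 h2 hf1 hf2
    rw [bk_not_free hf2]
    rcases bk_val hf1 with hb | hb <;> rw [hb] <;> omega
  · have := col_top_not_bot_free hlam hmu hP h1 h2 hf1 hf2
    rw [bk_not_free hf1]
    rcases bk_val hf2 with hb | hb <;> rw [hb] <;> omega
  · rw [bk_not_free hf1, bk_not_free hf2]
    exact hP.2.2 i j h1 h2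

/-- `bk P` is an SSYT. -/
lemma bk_ssyt : IsSSYT lam mu (bk lam mu P k) := by
  refine ⟨?_, fun i j h1 h2 => bk_row hlam hmu hP h1 h2,
    fun i j h1 h2 => bk_col hlam hmu hP h1 h2⟩
  intro p hp
  obtain ⟨i, j⟩ := p
  rw [bk_not_free (fun hf => hp hf.1)]
  exact hP.1 (i, j) hp

/-- vertical `(k, k+1)` pairs are preserved by `bk`. -/
lemma pair_iff {i j : ℕ} (h1 : (i, j) ∈ cells lam mu) (h2 : (i+1, j) ∈ cells lam mu) :
    (bk lam mu P k (i, j) = k ∧ bk lam mu P k (i+1, j) = k+1) ↔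
      (P (i, j) = k ∧ P (i+1, j) = k+1) := by
  constructor
  · rintro ⟨hq1, hq2⟩
    by_cases hf1 : freeCell lam mu P k i j <;> by_cases hf2 : freeCell lam mu P k (i+1) j
    · exact absurd (not_both_free hlam hmu hP h1 h2 hf1 hf2) (fun h => h)
    · have := col_top_free_bot_not hlam hmu hP h1 h2 hf1 hf2
      rw [bk_not_free hf2] at hq2
      omega
    · have := col_top_not_bot_free hlam hmu hP h1 h2 hf1 hf2
      rw [bk_not_free hf1] at hq1
      omega
    · rw [bk_not_free hf1] at hq1
      rw [bk_not_free hf2] at hq2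
      exact ⟨hq1, hq2⟩
  · rintro ⟨hp1, hp2⟩
    have hf1 : ¬ freeCell lam mu P k i j := by
      rintro ⟨_, ⟨_, hn⟩ | ⟨hx, _⟩⟩
      · exact hn ⟨h2, hp2⟩
      · omega
    have hf2 : ¬ freeCell lam mu P k (i+1) j := by
      rintro ⟨_, ⟨hx, _⟩ | ⟨_, hn⟩⟩
      · omega
      · exact hn ⟨by simpa using h1, by simpa using hp1⟩
    rw [bk_not_free hf1, bk_not_free hf2]
    exact ⟨hp1, hp2⟩

/-- freeness is preserved by `bk`. -/
lemma free_iff {i j : ℕ} :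
    freeCell lam mu (bk lam mu P k) k i j ↔ freeCell lam mu P k i j := by
  constructor
  · rintro ⟨hmem, hd⟩
    by_contra hnf
    have hqv : bk lam mu P k (i, j) = P (i, j) := bk_not_free hnf
    rcases hd with ⟨hv, hn⟩ | ⟨hv, hn⟩
    · obtain ⟨hc, hcv⟩ := not_free_k hmem (hqv ▸ hv) hnf
      exact hn ⟨hc, ((pair_iff hlam hmu hP hmem hc).2 ⟨hqv ▸ hv, hcv⟩).2⟩
    · obtain ⟨hc, hcv⟩ := not_free_k1 hmem (hqv ▸ hv) hnf
      have hi1 : 1 ≤ i := hmem.1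
      obtain ⟨m, rfl⟩ : ∃ m, i = m + 1 := ⟨i - 1, by omega⟩
      have hm : m + 1 - 1 = m := by omega
      rw [hm] at hc hcv hn
      refine hn ⟨hc, ?_⟩
      exact ((pair_iff hlam hmu hP hc hmem).2 ⟨hcv, hqv ▸ hv⟩).1
  · intro hf
    refine ⟨hf.1, ?_⟩
    rcases bk_val hf with hb | hb
    · left
      refine ⟨hb, ?_⟩
      rintro ⟨hc, hcv⟩
      have := (pair_iff hlam hmu hP hf.1 hc).1 ⟨hb, hcv⟩
      rcases hf.2 with ⟨_, hn⟩ | ⟨hx, _⟩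
      · exact hn ⟨hc, this.2⟩
      · omega
    · right
      refine ⟨hb, ?_⟩
      rintro ⟨hc, hcv⟩
      have hi1 : 1 ≤ i := hf.1.1
      obtain ⟨m, rfl⟩ : ∃ m, i = m + 1 := ⟨i - 1, by omega⟩
      have hm : m + 1 - 1 = m := by omega
      rw [hm] at hc hcv
      have := (pair_iff hlam hmu hP hc hf.1).1 ⟨hcv, hb⟩
      rcases hf.2 with ⟨hx, _⟩ | ⟨_, hn⟩
      · omega
      · exact hn ⟨by simpa using hc, by simpa using this.1⟩

lemma rowF_bk {i : ℕ} : rowF lam mu (bk lam mu P k) k i = rowF lam mu P k i := by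
  ext j
  rw [mem_rowF hlam, mem_rowF hlam, free_iff hlam hmu hP]

/-- `bk` is an involution. -/
lemma bk_bk : bk lam mu (bk lam mu P k) k = P := by
  funext q
  obtain ⟨i, j⟩ := q
  by_cases hf : freeCell lam mu P k i j
  · have hfq : freeCell lam mu (bk lam mu P k) k i j := (free_iff hlam hmu hP).2 hf
    have hbnum : bnum lam mu (bk lam mu P k) k i = anum lam mu P k i := by
      rw [bnum, rowF_bk hlam hmu hP]
      have hsplit := Finset.card_filter_add_card_filter_not
        (s := rowF lam mu P k i) (p := fun j => bk lam mu P k (i, j) = k)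
      have hQk := bk_k_count (lam := lam) (mu := mu) (P := P) (k := k) (i := i) hlam
      have hcard := rowF_card (lam := lam) (mu := mu) (P := P) (k := k) (i := i) hlam
      have heq : (rowF lam mu P k i).filter (fun j => bk lam mu P k (i, j) = k+1)
          = (rowF lam mu P k i).filter (fun j => ¬ bk lam mu P k (i, j) = k) := by
        apply Finset.filter_congr
        intro j hj
        rw [mem_rowF hlam] at hj
        rcases bk_val hj with hb | hb <;> simp [hb]
      rw [heq]
      omega
    have hrnk : rnk lam mu (bk lam mu P k) k i j = rnk lam mu P k i j := by
      rw [rnk, rnk, rowF_bk hlam hmu hP]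
    rw [bk]
    simp only [hfq, if_true, hrnk, hbnum]
    have hchar := P_free_char hlam hP hf
    have hqchar : bk lam mu P k (i, j) = k ↔ rnk lam mu P k i j < bnum lam mu P k i := by
      rw [bk]
      simp only [hf, if_true]
      split <;> simp_all
    rcases free_val hf with hv | hv
    · rw [if_pos (hchar.1 hv), hv]
    · rw [if_neg, hv]
      intro hc
      have := hchar.2 hc
      omega
  · have hfq : ¬ freeCell lam mu (bk lam mu P k) k i j :=
      fun h => hf ((free_iff hlam hmu hP).1 h)
    rw [bk_not_free hfq, bk_not_free hf]

/-- number of entries equal to `v`. -/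
noncomputable def ct (lam mu : ℕ → ℕ) (T : ℕ × ℕ → ℕ) (v : ℕ) : ℕ :=
  ((cellsF lam mu).filter (fun p => T p = v)).card

omit hmu hP in
lemma global_free_card (T : ℕ × ℕ → ℕ) (v : ℕ) :
    ((cellsF lam mu).filter (fun p => freeCell lam mu P k p.1 p.2 ∧ T p = v)).card
      = ∑ i ∈ (cellsF lam mu).image Prod.fst,
          ((rowF lam mu P k i).filter (fun j => T (i, j) = v)).card := by
  rw [Finset.card_eq_sum_card_fiberwise
    (f := Prod.fst) (t := (cellsF lam mu).image Prod.fst)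
    (fun p hp => Finset.mem_image_of_mem _ (Finset.mem_filter.1 hp).1)]
  apply Finset.sum_congr rfl
  intro i _
  apply Finset.card_bij (fun p _ => p.2)
  · rintro ⟨i', j⟩ hp
    simp only [Finset.mem_filter] at hp ⊢
    obtain ⟨⟨hc, hfree, hf⟩, hi⟩ := hp
    subst hi
    rw [mem_rowF hlam]
    exact ⟨hfree, hf⟩
  · rintro ⟨i1, j1⟩ h1 ⟨i2, j2⟩ h2 he
    simp only [Finset.mem_filter] at h1 h2
    simp only at he
    rw [Prod.mk.injEq]
    exact ⟨h1.2.trans h2.2.symm, he⟩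
  · intro j hj
    simp only [Finset.mem_filter, mem_rowF hlam] at hj
    refine ⟨(i, j), ?_, rfl⟩
    simp only [Finset.mem_filter]
    exact ⟨⟨(mem_cellsF hlam).2 hj.1.1, hj.1, hj.2⟩, trivial⟩

omit hP in
lemma nonfree_shift :
    ((cellsF lam mu).filter (fun p => P p = k ∧ ¬ freeCell lam mu P k p.1 p.2)).card
      = ((cellsF lam mu).filter
          (fun p => P p = k+1 ∧ ¬ freeCell lam mu P k p.1 p.2)).card := by
  apply Finset.card_bij (fun p _ => (p.1 + 1, p.2))
  · rintro ⟨i, j⟩ hp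
    simp only [Finset.mem_filter, mem_cellsF hlam] at hp ⊢
    obtain ⟨hc, hv, hnf⟩ := hp
    obtain ⟨hc1, hv1⟩ := not_free_k hc hv hnf
    refine ⟨hc1, hv1, ?_⟩
    rintro ⟨_, ⟨hx, _⟩ | ⟨_, hn⟩⟩
    · omega
    · exact hn ⟨by simpa using hc, by simpa using hv⟩
  · rintro ⟨i1, j1⟩ h1 ⟨i2, j2⟩ h2 he
    simp only [Prod.mk.injEq] at he ⊢
    omega
  · rintro ⟨i, j⟩ hj
    simp only [Finset.mem_filter, mem_cellsF hlam] at hj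
    obtain ⟨hc, hv, hnf⟩ := hj
    obtain ⟨hc1, hv1⟩ := not_free_k1 hc hv hnf
    have hi1 : 1 ≤ i := hc.1
    refine ⟨(i - 1, j), ?_, by simp; omega⟩
    simp only [Finset.mem_filter, mem_cellsF hlam]
    refine ⟨hc1, hv1, ?_⟩
    rintro ⟨_, ⟨_, hn⟩ | ⟨hx, _⟩⟩
    · refine hn ⟨?_, ?_⟩
      · have : i - 1 + 1 = i := by omega
        rw [this]; exact hc
      · have : i - 1 + 1 = i := by omega
        rw [this]; exact hv
    · omega

lemma ct_split (T : ℕ × ℕ → ℕ) (v : ℕ) :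
    ct lam mu T v = ((cellsF lam mu).filter
        (fun p => freeCell lam mu P k p.1 p.2 ∧ T p = v)).card
      + ((cellsF lam mu).filter
        (fun p => T p = v ∧ ¬ freeCell lam mu P k p.1 p.2)).card := by
  rw [ct, ← Finset.card_filter_add_card_filter_not
    (s := (cellsF lam mu).filter (fun p => T p = v))
    (p := fun p => freeCell lam mu P k p.1 p.2)]
  rw [Finset.filter_filter, Finset.filter_filter]
  congr 1
  congr 1
  apply Finset.filter_congr
  intro p _
  exact ⟨fun h => ⟨h.2, h.1⟩, fun h => ⟨h.2, h.1⟩⟩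

lemma ct_bk_k : ct lam mu (bk lam mu P k) k = ct lam mu P (k+1) := by
  rw [ct_split (P := P) (k := k) hlam hmu hP (bk lam mu P k) k,
    ct_split (P := P) (k := k) hlam hmu hP P (k+1)]
  congr 1
  · refine (global_free_card hlam (bk lam mu P k) k).trans
      (Eq.trans ?_ (global_free_card hlam P (k+1)).symm)
    apply Finset.sum_congr rfl
    intro i _
    rw [bk_k_count hlam, bnum]
  · have heq : (cellsF lam mu).filter
        (fun p => bk lam mu P k p = k ∧ ¬ freeCell lam mu P k p.1 p.2)
        = (cellsF lam mu).filter
          (fun p => P p = k ∧ ¬ freeCell lam mu P k p.1 p.2) := by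
      apply Finset.filter_congr
      rintro ⟨i, j⟩ _
      constructor
      · rintro ⟨hq, hnf⟩; exact ⟨(bk_not_free hnf) ▸ hq, hnf⟩
      · rintro ⟨hp, hnf⟩; exact ⟨(bk_not_free hnf).symm ▸ hp, hnf⟩
    rw [heq, nonfree_shift hlam hmu]

lemma ct_bk_k1 : ct lam mu (bk lam mu P k) (k+1) = ct lam mu P k := by
  rw [ct_split (P := P) (k := k) hlam hmu hP (bk lam mu P k) (k+1),
    ct_split (P := P) (k := k) hlam hmu hP P k]
  congr 1
  · refine (global_free_card hlam (bk lam mu P k) (k+1)).trans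
      (Eq.trans ?_ (global_free_card hlam P k).symm)
    apply Finset.sum_congr rfl
    intro i _
    have h1 : ((rowF lam mu P k i).filter (fun j => bk lam mu P k (i, j) = k+1)).card
        = (rowF lam mu P k i).card
          - ((rowF lam mu P k i).filter (fun j => bk lam mu P k (i, j) = k)).card := by
      have heq : (rowF lam mu P k i).filter (fun j => bk lam mu P k (i, j) = k+1)
          = (rowF lam mu P k i).filter (fun j => ¬ bk lam mu P k (i, j) = k) := by
        apply Finset.filter_congr
        intro j hj
        rw [mem_rowF hlam] at hj
        rcases bk_val hj with hb | hb <;> simp [hb]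
      have hsplit := Finset.card_filter_add_card_filter_not
        (s := rowF lam mu P k i) (p := fun j => bk lam mu P k (i, j) = k)
      rw [heq]
      omega
    have h2 : ((rowF lam mu P k i).filter (fun j => P (i, j) = k)).card
        = anum lam mu P k i := rfl
    rw [h1, h2, bk_k_count hlam, rowF_card (lam := lam) (mu := mu) hlam]
    omega
  · have heq : (cellsF lam mu).filter
        (fun p => bk lam mu P k p = k+1 ∧ ¬ freeCell lam mu P k p.1 p.2)
        = (cellsF lam mu).filter
          (fun p => P p = k+1 ∧ ¬ freeCell lam mu P k p.1 p.2) := by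
      apply Finset.filter_congr
      rintro ⟨i, j⟩ _
      constructor
      · rintro ⟨hq, hnf⟩; exact ⟨(bk_not_free hnf) ▸ hq, hnf⟩
      · rintro ⟨hp, hnf⟩; exact ⟨(bk_not_free hnf).symm ▸ hp, hnf⟩
    rw [heq, ← nonfree_shift hlam hmu]

omit hmu hP in
lemma ct_bk_other {v : ℕ} (hv1 : v ≠ k) (hv2 : v ≠ k + 1) :
    ct lam mu (bk lam mu P k) v = ct lam mu P v := by
  rw [ct, ct]
  congr 1
  apply Finset.filter_congr
  rintro ⟨i, j⟩ _
  by_cases hf : freeCell lam mu P k i j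
  · constructor
    · intro hq
      rcases bk_val hf with hb | hb <;> omega
    · intro hp
      rcases free_val hf with hb | hb <;> omega
  · rw [bk_not_free hf]

end

section
variable {lam mu : ℕ → ℕ}

noncomputable def bkFold (lam mu : ℕ → ℕ) : List ℕ → (ℕ × ℕ → ℕ) → (ℕ × ℕ → ℕ)
  | [], P => P
  | k :: ls, P => bkFold lam mu ls (bk lam mu P k)

def word : ℕ → List ℕ
  | 0 => []
  | n + 1 => List.range (n+1) ++ word n

def sw (k v : ℕ) : ℕ := if v = k then k + 1 else if v = k + 1 then k else v

def sigma : List ℕ → ℕ → ℕ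
  | [], v => v
  | k :: ls, v => sw k (sigma ls v)

lemma mem_word {k n : ℕ} (h : k ∈ word n) : k + 1 ≤ n := by
  induction n with
  | zero => simp [word] at h
  | succ m ih =>
    rw [word, List.mem_append] at h
    rcases h with h | h
    · simp at h; omega
    · have := ih h; omega

lemma sigma_append (l1 l2 : List ℕ) (v : ℕ) :
    sigma (l1 ++ l2) v = sigma l1 (sigma l2 v) := by
  induction l1 with
  | nil => rfl
  | cons k ls ih => simp [sigma, ih]

lemma sigma_range (m v : ℕ) :
    sigma (List.range m) v = if v < m then v + 1 else if v = m then 0 else v := by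
  induction m generalizing v with
  | zero =>
    simp only [List.range_zero, sigma]
    split_ifs <;> omega
  | succ n ih =>
    rw [List.range_succ, sigma_append]
    have h0 : sigma [n] v = sw n v := rfl
    rw [h0, sw]
    split_ifs <;> rw [ih] <;> split_ifs <;> omega

lemma sigma_word_gt {n v : ℕ} (h : n < v) : sigma (word n) v = v := by
  induction n with
  | zero => rfl
  | succ m ih =>
    rw [word, sigma_append, ih (by omega), sigma_range]
    split_ifs <;> omega

lemma sigma_word {n v : ℕ} (h : v ≤ n) : sigma (word n) v = n - v := by
  induction n with
  | zero => interval_cases v; rfl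
  | succ m ih =>
    rw [word, sigma_append]
    rcases Nat.lt_or_ge v (m+1) with hv | hv
    · rw [ih (by omega), sigma_range]
      split_ifs <;> omega
    · have hv' : v = m + 1 := by omega
      rw [hv', sigma_word_gt (by omega), sigma_range]
      split_ifs <;> omega

variable (hlam : IsPartition lam) (hmu : IsPartition mu)
include hlam hmu

lemma bk_good {P : ℕ × ℕ → ℕ} {k N : ℕ} (hP : IsSSYT lam mu P)
    (hPN : ∀ p ∈ cells lam mu, P p ≤ N) (hk : k + 1 ≤ N) :
    IsSSYT lam mu (bk lam mu P k) ∧ ∀ p ∈ cells lam mu, bk lam mu P k p ≤ N := by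
  refine ⟨bk_ssyt hlam hmu hP, ?_⟩
  rintro ⟨i, j⟩ hp
  by_cases hf : freeCell lam mu P k i j
  · rcases bk_val hf with hb | hb <;> omega
  · rw [bk_not_free hf]; exact hPN _ hp

lemma bkFold_good {P : ℕ × ℕ → ℕ} {N : ℕ} (l : List ℕ) (hP : IsSSYT lam mu P)
    (hPN : ∀ p ∈ cells lam mu, P p ≤ N) (hl : ∀ k ∈ l, k + 1 ≤ N) :
    IsSSYT lam mu (bkFold lam mu l P) ∧ ∀ p ∈ cells lam mu, bkFold lam mu l P p ≤ N := by
  induction l generalizing P with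
  | nil => exact ⟨hP, hPN⟩
  | cons k ls ih =>
    obtain ⟨h1, h2⟩ := bk_good hlam hmu hP hPN (hl k (by simp))
    exact ih h1 h2 (fun k' hk' => hl k' (by simp [hk']))

lemma ct_bkFold {P : ℕ × ℕ → ℕ} (l : List ℕ) (hP : IsSSYT lam mu P) (v : ℕ) :
    ct lam mu (bkFold lam mu l P) v = ct lam mu P (sigma l v) := by
  induction l generalizing P v with
  | nil => rfl
  | cons k ls ih =>
    rw [bkFold, ih (bk_ssyt hlam hmu hP), sigma]
    rcases Nat.lt_trichotomy (sigma ls v) k with h | h | h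
    · rw [ct_bk_other hlam (by omega) (by omega), sw, if_neg (by omega), if_neg (by omega)]
    · rw [h, ct_bk_k hlam hmu hP, sw, if_pos rfl]
    · rcases Nat.lt_or_ge (k+1) (sigma ls v) with h' | h'
      · rw [ct_bk_other hlam (by omega) (by omega), sw, if_neg (by omega), if_neg (by omega)]
      · have : sigma ls v = k + 1 := by omega
        rw [this, ct_bk_k1 hlam hmu hP, sw, if_neg (by omega), if_pos rfl]

omit hlam hmu in
lemma bkFold_append (l1 l2 : List ℕ) (P : ℕ × ℕ → ℕ) :
    bkFold lam mu (l1 ++ l2) P = bkFold lam mu l2 (bkFold lam mu l1 P) := by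
  induction l1 generalizing P with
  | nil => rfl
  | cons k ls ih => rw [List.cons_append, bkFold, bkFold, ih]

lemma bkFold_rev {P : ℕ × ℕ → ℕ} (l : List ℕ) (hP : IsSSYT lam mu P) :
    bkFold lam mu l.reverse (bkFold lam mu l P) = P := by
  induction l generalizing P with
  | nil => rfl
  | cons k ls ih =>
    rw [bkFold, List.reverse_cons, bkFold_append, ih (bk_ssyt hlam hmu hP)]
    exact bk_bk hlam hmu hP

end

section
variable {lam mu : ℕ → ℕ} {N : ℕ}

/-- complementation `T ↦ N - T` inside the cells. -/
noncomputable def compl (lam mu : ℕ → ℕ) (N : ℕ) (T : ℕ × ℕ → ℕ) : ℕ × ℕ → ℕ :=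
  fun q => if q ∈ cells lam mu then N - T q else 0

lemma compl_mem {T : ℕ × ℕ → ℕ} {p : ℕ × ℕ} (hp : p ∈ cells lam mu) :
    compl lam mu N T p = N - T p := if_pos hp

lemma compl_le {T : ℕ × ℕ → ℕ} : ∀ p ∈ cells lam mu, compl lam mu N T p ≤ N := by
  intro p hp
  rw [compl_mem hp]
  omega

lemma compl_rssyt {T : ℕ × ℕ → ℕ} (hT : IsSSYT lam mu T)
    (hTN : ∀ p ∈ cells lam mu, T p ≤ N) : IsRSSYT lam mu (compl lam mu N T) := by
  refine ⟨fun p hp => if_neg hp, ?_, ?_⟩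
  · intro i j h1 h2
    rw [compl_mem h1, compl_mem h2]
    have := hT.2.1 i j h1 h2
    omega
  · intro i j h1 h2
    rw [compl_mem h1, compl_mem h2]
    have h3 := hT.2.2 i j h1 h2
    have h4 := hTN _ h2
    omega

lemma compl_ssyt {R : ℕ × ℕ → ℕ} (hR : IsRSSYT lam mu R)
    (hRN : ∀ p ∈ cells lam mu, R p ≤ N) : IsSSYT lam mu (compl lam mu N R) := by
  refine ⟨fun p hp => if_neg hp, ?_, ?_⟩
  · intro i j h1 h2
    rw [compl_mem h1, compl_mem h2]
    have := hR.2.1 i j h1 h2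
    omega
  · intro i j h1 h2
    rw [compl_mem h1, compl_mem h2]
    have h3 := hR.2.2 i j h1 h2
    have h4 := hRN _ h1
    omega

lemma compl_compl {T : ℕ × ℕ → ℕ} (hT : IsFilling lam mu T)
    (hTN : ∀ p ∈ cells lam mu, T p ≤ N) : compl lam mu N (compl lam mu N T) = T := by
  funext q
  by_cases hq : q ∈ cells lam mu
  · rw [compl_mem hq, compl_mem hq]
    have := hTN q hq
    omega
  · rw [compl, if_neg hq, hT q hq]

variable (hlam : IsPartition lam)
include hlam

lemma tnorm_eq (T : ℕ × ℕ → ℕ) :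
    tnorm lam mu T = ∑ p ∈ cellsF lam mu, T p := by
  rw [tnorm]
  have : cells lam mu = ↑(cellsF lam mu) := by
    ext p
    rw [Finset.mem_coe, mem_cellsF hlam]
  rw [this, finsum_mem_coe_finset]

lemma sum_ct {T : ℕ × ℕ → ℕ} (hTN : ∀ p ∈ cells lam mu, T p ≤ N) :
    ∑ p ∈ cellsF lam mu, T p = ∑ v ∈ Finset.range (N+1), ct lam mu T v * v := by
  rw [← Finset.sum_fiberwise_of_maps_to (g := T) (t := Finset.range (N+1))
    (fun p hp => Finset.mem_range.2 (by
      have := hTN p ((mem_cellsF hlam).1 hp); omega))]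
  apply Finset.sum_congr rfl
  intro v _
  rw [ct]
  rw [Finset.sum_congr rfl (fun p hp => (Finset.mem_filter.1 hp).2)]
  rw [Finset.sum_const, smul_eq_mul]

lemma ct_total {T : ℕ × ℕ → ℕ} (hTN : ∀ p ∈ cells lam mu, T p ≤ N) :
    ∑ v ∈ Finset.range (N+1), ct lam mu T v = (cellsF lam mu).card :=
  (Finset.card_eq_sum_card_fiberwise (fun p hp => Finset.mem_range.2 (by
    have := hTN p ((mem_cellsF hlam).1 hp); omega))).symm

lemma sum_compl {T : ℕ × ℕ → ℕ} (hTN : ∀ p ∈ cells lam mu, T p ≤ N) :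
    ∑ p ∈ cellsF lam mu, compl lam mu N T p + ∑ p ∈ cellsF lam mu, T p
      = N * (cellsF lam mu).card := by
  rw [← Finset.sum_add_distrib]
  have h1 : ∀ p ∈ cellsF lam mu, compl lam mu N T p + T p = N := by
    intro p hp
    have hp' := (mem_cellsF hlam).1 hp
    rw [compl_mem hp']
    have := hTN p hp'
    omega
  rw [Finset.sum_congr rfl h1, Finset.sum_const, smul_eq_mul, mul_comm]

end

/-- The master bijection. -/
theorem main (lam mu : ℕ → ℕ) (N : ℕ) (hlam : IsPartition lam) (hmu : IsPartition mu) :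
    ∃ f : {P : ℕ × ℕ → ℕ // IsSSYT lam mu P ∧ ∀ p ∈ cells lam mu, P p ≤ N} ≃
        {R : ℕ × ℕ → ℕ // IsRSSYT lam mu R ∧ ∀ p ∈ cells lam mu, R p ≤ N},
      ∀ P, tnorm lam mu (f P).1 = tnorm lam mu P.1 := by
  have hW : ∀ k ∈ word N, k + 1 ≤ N := fun k hk => mem_word hk
  have hWr : ∀ k ∈ (word N).reverse, k + 1 ≤ N := by
    intro k hk
    exact hW k (List.mem_reverse.1 hk)
  have hGood : ∀ P : ℕ × ℕ → ℕ, IsSSYT lam mu P → (∀ p ∈ cells lam mu, P p ≤ N) →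
      IsSSYT lam mu (bkFold lam mu (word N) P) ∧
        ∀ p ∈ cells lam mu, bkFold lam mu (word N) P p ≤ N :=
    fun P hP hPN => bkFold_good hlam hmu _ hP hPN hW
  refine ⟨⟨fun X => ⟨compl lam mu N (bkFold lam mu (word N) X.1),
      compl_rssyt (hGood X.1 X.2.1 X.2.2).1 (hGood X.1 X.2.1 X.2.2).2, compl_le⟩,
    fun Y => ⟨bkFold lam mu (word N).reverse (compl lam mu N Y.1),
      (bkFold_good hlam hmu _ (compl_ssyt Y.2.1 Y.2.2) compl_le hWr).1,
      (bkFold_good hlam hmu _ (compl_ssyt Y.2.1 Y.2.2) compl_le hWr).2⟩,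
    ?_, ?_⟩, ?_⟩
  · rintro ⟨P, hP, hPN⟩
    apply Subtype.ext
    simp only
    rw [compl_compl (hGood P hP hPN).1.1 (hGood P hP hPN).2]
    exact bkFold_rev hlam hmu _ hP
  · rintro ⟨R, hR, hRN⟩
    apply Subtype.ext
    simp only
    have h2 : bkFold lam mu (word N)
        (bkFold lam mu (word N).reverse (compl lam mu N R)) = compl lam mu N R := by
      have := bkFold_rev hlam hmu (word N).reverse (compl_ssyt hR hRN)
      rwa [List.reverse_reverse] at this
    rw [h2]
    exact compl_compl hR.1 hRN
  · rintro ⟨P, hP, hPN⟩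
    simp only
    set P' := bkFold lam mu (word N) P with hP'
    obtain ⟨hP'S, hP'N⟩ := hGood P hP hPN
    rw [tnorm_eq hlam, tnorm_eq hlam]
    have hsum : ∑ p ∈ cellsF lam mu, P' p + ∑ p ∈ cellsF lam mu, P p
        = N * (cellsF lam mu).card := by
      rw [sum_ct hlam hP'N, sum_ct hlam hPN]
      have hct : ∀ v ∈ Finset.range (N+1), ct lam mu P' v * v
          = ct lam mu P (N - v) * v := by
        intro v hv
        rw [hP', ct_bkFold hlam hmu _ hP, sigma_word (by
          simp only [Finset.mem_range] at hv; omega)]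
      rw [Finset.sum_congr rfl hct]
      have hrefl : ∑ v ∈ Finset.range (N+1), ct lam mu P (N - v) * v
          = ∑ v ∈ Finset.range (N+1), ct lam mu P v * (N - v) := by
        rw [← Finset.sum_range_reflect (fun v => ct lam mu P (N - v) * v) (N+1)]
        apply Finset.sum_congr rfl
        intro v hv
        simp only [Finset.mem_range] at hv
        have e2 : N + 1 - 1 - v = N - v := by omega
        have e1 : N - (N - v) = v := by omega
        rw [e2, e1]
      rw [hrefl, ← Finset.sum_add_distrib]
      have : ∀ v ∈ Finset.range (N+1), ct lam mu P v * (N - v) + ct lam mu P v * v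
          = ct lam mu P v * N := by
        intro v hv
        simp only [Finset.mem_range] at hv
        rw [← Nat.mul_add]
        congr 1
        omega
      rw [Finset.sum_congr rfl this, ← Finset.sum_mul, ct_total hlam hPN, mul_comm]
    have hcsum := sum_compl hlam hP'N
    generalize hA : ∑ p ∈ cellsF lam mu, compl lam mu N P' p = A at hcsum ⊢
    generalize hB : ∑ p ∈ cellsF lam mu, P' p = B at hcsum hsum
    generalize hC : ∑ p ∈ cellsF lam mu, P p = C at hsum ⊢
    omega
end BK


/-- The number of SSYT of shape `lam/mu` with entries in
`{0,…,N}` equals the number of reverse SSYT with entries in `{0,…,N}`, and the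
correspondence can be chosen to preserve the sum of entries. -/
theorem stmt7 (lam mu : ℕ → ℕ) (N : ℕ)
    (hlam : IsPartition lam) (hmu : IsPartition mu) (hsub : ∀ i, mu i ≤ lam i) :
    {P | IsSSYT lam mu P ∧ ∀ p ∈ cells lam mu, P p ≤ N}.ncard =
      {R | IsRSSYT lam mu R ∧ ∀ p ∈ cells lam mu, R p ≤ N}.ncard ∧
    ∃ f : {P : ℕ × ℕ → ℕ // IsSSYT lam mu P ∧ ∀ p ∈ cells lam mu, P p ≤ N} ≃
        {R : ℕ × ℕ → ℕ // IsRSSYT lam mu R ∧ ∀ p ∈ cells lam mu, R p ≤ N},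
      ∀ P, tnorm lam mu (f P).1 = tnorm lam mu P.1 := by
  obtain ⟨f, hf⟩ := BK.main lam mu N hlam hmu
  refine ⟨?_, f, hf⟩
  rw [← Nat.card_coe_set_eq, ← Nat.card_coe_set_eq]
  exact Nat.card_congr f
end
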